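/- arXiv:1312.7185 — 10 statements merged into one kernel-verified Lean document; each statement's English description precedes it below -/
import Mathlib

section
/- Let a₁ and a₂ be relatively prime positive integers. Then the numerical semigroup ⟨a₁,a₂⟩ equals the set {x ∈ ℕ : [[a₂⁻¹]_{a₁}·a₂·x]_{a₁a₂} ≤ x}. -/
/-- The numerical semigroup generated by `a` and `b`:
`⟨a,b⟩ = {λ₁a + λ₂b : λ₁, λ₂ ∈ ℕ}`. -/
def numSg (a b : ℕ) : Set ℕ := {x | ∃ p q : ℕ, x = p * a + q * b}

/-- `[m⁻¹]ₙ`: the representative in `[0,n)` of the inverse of `m` modulo `n`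
(meaningful when `gcd m n = 1` and `n > 0`).  The remainder operator `[m]ₙ`
is ordinary `m % n`. -/
noncomputable def modInv (m n : ℕ) : ℕ := ((m : ZMod n)⁻¹).val

/-- Let `a₁` and `a₂` be relatively prime positive integers.  Then
`⟨a₁,a₂⟩ = {x ∈ ℕ : [[a₂⁻¹]_{a₁}·a₂·x]_{a₁a₂} ≤ x}`. -/
theorem stmt0 (a₁ a₂ : ℕ) (ha₁ : 0 < a₁) (ha₂ : 0 < a₂) (hco : Nat.Coprime a₁ a₂) :
    numSg a₁ a₂ = {x : ℕ | (modInv a₂ a₁ * a₂ * x) % (a₁ * a₂) ≤ x} := by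
  haveI : NeZero a₁ := ⟨ha₁.ne'⟩
  have key : modInv a₂ a₁ * a₂ ≡ 1 [MOD a₁] := by
    have h1 : (a₂ : ZMod a₁) * (a₂ : ZMod a₁)⁻¹ = 1 :=
      ZMod.coe_mul_inv_eq_one a₂ hco.symm
    have h2 : ((modInv a₂ a₁ * a₂ : ℕ) : ZMod a₁) = ((1 : ℕ) : ZMod a₁) := by
      push_cast
      rw [modInv, ZMod.natCast_val, ZMod.cast_id, mul_comm]
      exact h1
    exact (ZMod.natCast_eq_natCast_iff _ _ _).mp h2
  ext x
  simp only [numSg, Set.mem_setOf_eq]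
  constructor
  · rintro ⟨p, q, rfl⟩
    have h3 : modInv a₂ a₁ * a₂ * q ≡ q % a₁ [MOD a₁] :=
      ((key.mul_right q).trans (by rw [one_mul])).trans (Nat.mod_modEq q a₁).symm
    have h2 : modInv a₂ a₁ * a₂ * (p * a₁ + q * a₂) ≡ (q % a₁) * a₂ [MOD a₁ * a₂] := by
      have e : modInv a₂ a₁ * a₂ * (p * a₁ + q * a₂)
          = (modInv a₂ a₁ * p) * (a₁ * a₂) + (modInv a₂ a₁ * a₂ * q) * a₂ := by ring
      rw [e]
      calc (modInv a₂ a₁ * p) * (a₁ * a₂) + (modInv a₂ a₁ * a₂ * q) * a₂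
          ≡ 0 + (q % a₁) * a₂ [MOD a₁ * a₂] :=
            Nat.ModEq.add ((Nat.modEq_zero_iff_dvd).mpr ⟨_, mul_comm _ _⟩)
              (h3.mul_right' a₂)
        _ = (q % a₁) * a₂ := by ring
    have hlt : (q % a₁) * a₂ < a₁ * a₂ :=
      (Nat.mul_lt_mul_right ha₂).mpr (Nat.mod_lt q ha₁)
    calc (modInv a₂ a₁ * a₂ * (p * a₁ + q * a₂)) % (a₁ * a₂)
        = (q % a₁) * a₂ % (a₁ * a₂) := h2
      _ = (q % a₁) * a₂ := Nat.mod_eq_of_lt hlt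
      _ ≤ q * a₂ := Nat.mul_le_mul_right _ (Nat.mod_le q a₁)
      _ ≤ p * a₁ + q * a₂ := le_add_self
  · intro h
    set r := (modInv a₂ a₁ * a₂ * x) % (a₁ * a₂) with hr
    have hdvd : a₂ ∣ r := by
      rw [hr]
      exact (Nat.dvd_mod_iff ⟨a₁, mul_comm _ _⟩).mpr ⟨modInv a₂ a₁ * x, by ring⟩
    obtain ⟨q, hq⟩ := hdvd
    have hmod : r ≡ x [MOD a₁] := by
      have h1 : modInv a₂ a₁ * a₂ * x ≡ x [MOD a₁] :=
        (key.mul_right x).trans (by rw [one_mul])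
      have h2 : r ≡ modInv a₂ a₁ * a₂ * x [MOD a₁] :=
        (Nat.mod_modEq (modInv a₂ a₁ * a₂ * x) (a₁ * a₂)).of_dvd ⟨a₂, rfl⟩
      exact h2.trans h1
    obtain ⟨p, hp⟩ := (Nat.modEq_iff_dvd' h).mp hmod
    refine ⟨p, q, ?_⟩
    have hx : x = (x - r) + r := (Nat.sub_add_cancel h).symm
    rw [hx, hp, hq]; ring
end

section
/- Let a₁ and a₂ be relatively prime positive integers. Then the numerical semigroup ⟨a₁,a₂⟩ equals the set {x ∈ ℕ : a₂·[a₂⁻¹·x]_{a₁} ≤ x}. -/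
/-- Let `a₁` and `a₂` be relatively prime positive integers.  Then
`⟨a₁,a₂⟩ = {x ∈ ℕ : a₂·[a₂⁻¹·x]_{a₁} ≤ x}`. -/
theorem stmt1 (a₁ a₂ : ℕ) (ha₁ : 0 < a₁) (ha₂ : 0 < a₂) (hco : Nat.Coprime a₁ a₂) :
    numSg a₁ a₂ = {x : ℕ | a₂ * ((modInv a₂ a₁ * x) % a₁) ≤ x} := by
  haveI : NeZero a₁ := ⟨ha₁.ne'⟩
  have hinv : ((modInv a₂ a₁ : ℕ) : ZMod a₁) = (a₂ : ZMod a₁)⁻¹ := by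
    rw [modInv, ZMod.natCast_val, ZMod.cast_id]
  have hunit : ((a₂ : ZMod a₁) * (a₂ : ZMod a₁)⁻¹) = 1 :=
    ZMod.coe_mul_inv_eq_one a₂ hco.symm
  ext x
  simp only [numSg, Set.mem_setOf_eq]
  constructor
  · rintro ⟨p, q, rfl⟩
    have hcast : (((modInv a₂ a₁ * (p * a₁ + q * a₂)) % a₁ : ℕ) : ZMod a₁)
        = ((q % a₁ : ℕ) : ZMod a₁) := by
      rw [ZMod.natCast_mod, ZMod.natCast_mod]
      push_cast
      rw [hinv, ZMod.natCast_self]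
      ring_nf
      linear_combination (q : ZMod a₁) * hunit
    have heq : (modInv a₂ a₁ * (p * a₁ + q * a₂)) % a₁ = q % a₁ := by
      have := (ZMod.natCast_eq_natCast_iff' _ _ _).mp hcast
      simpa [Nat.mod_mod_of_dvd _ (dvd_refl a₁)] using this
    rw [heq]
    calc a₂ * (q % a₁) ≤ a₂ * q := Nat.mul_le_mul_left _ (Nat.mod_le _ _)
      _ ≤ p * a₁ + q * a₂ := by rw [mul_comm]; exact Nat.le_add_left _ _
  · intro hle
    set r := (modInv a₂ a₁ * x) % a₁ with hr
    have hcong : (a₂ * r) % a₁ = x % a₁ := by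
      have hcast : ((a₂ * r : ℕ) : ZMod a₁) = ((x : ℕ) : ZMod a₁) := by
        rw [hr]
        push_cast
        rw [ZMod.natCast_mod]
        push_cast
        rw [hinv, ← mul_assoc, hunit, one_mul]
      have := (ZMod.natCast_eq_natCast_iff' _ _ _).mp hcast
      simpa using this
    have hdvd : a₁ ∣ x - a₂ * r := by
      have h2 : (a₁ : ℤ) ∣ (x : ℤ) - (a₂ * r : ℕ) :=
        Nat.ModEq.dvd (hcong : a₂ * r ≡ x [MOD a₁])
      have := Int.ofNat_dvd.mp (by
        rwa [← Nat.cast_sub hle] at h2 : (a₁ : ℤ) ∣ ((x - a₂ * r : ℕ) : ℤ))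
      exact this
    obtain ⟨p, hp⟩ := hdvd
    exact ⟨p, r, by rw [mul_comm p a₁, mul_comm r a₂]; omega⟩
end

section
/- Let a₁, a₂ be coprime positive integers and let a₃ be a positive integer coprime to a₁. Then the quotient ⟨a₁,a₂⟩/a₃ equals the set {x ∈ ℕ : [x·a₃·a₂⁻¹]_{a₁}·a₂ ≤ x·a₃}. -/
/-!
An element `n` lies in `⟨a, b⟩` iff some `q` with `q * b ≤ n` satisfies `q * b ≡ n [MOD a]`.
For `b` invertible modulo `a`, the solutions `q` of that congruence are exactly the `q` congruent
to `n * [b⁻¹]ₐ`, and the least of them is `[n * b⁻¹]ₐ`; so `n ∈ ⟨a, b⟩` iff `[n * b⁻¹]ₐ * b ≤ n`.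
-/

theorem natCast_modInv (m n : ℕ) [NeZero n] : ((modInv m n : ℕ) : ZMod n) = (m : ZMod n)⁻¹ :=
  ZMod.natCast_zmod_val _

theorem mem_numSg_iff_exists_modEq (a b n : ℕ) :
    n ∈ numSg a b ↔ ∃ q, q * b ≤ n ∧ q * b ≡ n [MOD a] := by
  constructor
  · rintro ⟨p, q, rfl⟩
    exact ⟨q, Nat.le_add_left _ _, by simp [Nat.ModEq]⟩
  · rintro ⟨q, hle, hmod⟩
    obtain ⟨p, hp⟩ := (Nat.modEq_iff_dvd' hle).mp hmod
    exact ⟨p, q, by rw [mul_comm p a, ← hp, Nat.sub_add_cancel hle]⟩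

theorem mul_modEq_iff_modEq_mul_modInv {a b : ℕ} (ha : 0 < a) (hab : Nat.Coprime a b)
    (q n : ℕ) : q * b ≡ n [MOD a] ↔ q ≡ n * modInv b a [MOD a] := by
  have : NeZero a := ⟨ha.ne'⟩
  have hb : IsUnit (b : ZMod a) := (ZMod.isUnit_iff_coprime b a).mpr hab.symm
  simp only [← ZMod.natCast_eq_natCast_iff, Nat.cast_mul, natCast_modInv]
  exact ⟨fun h => by rw [← h, mul_assoc, ZMod.mul_inv_of_unit _ hb, mul_one],
    fun h => by rw [h, mul_assoc, ZMod.inv_mul_of_unit _ hb, mul_one]⟩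

theorem mem_numSg_iff {a b : ℕ} (ha : 0 < a) (hab : Nat.Coprime a b) (n : ℕ) :
    n ∈ numSg a b ↔ (n * modInv b a % a) * b ≤ n := by
  simp only [mem_numSg_iff_exists_modEq, mul_modEq_iff_modEq_mul_modInv ha hab]
  constructor
  · rintro ⟨q, hle, hq⟩
    have hmin : n * modInv b a % a ≤ q := hq.symm ▸ Nat.mod_le q a
    exact (Nat.mul_le_mul_right b hmin).trans hle
  · exact fun hle => ⟨_, hle, Nat.mod_modEq _ _⟩

theorem stmt2_general (a₁ a₂ a₃ : ℕ) (ha₁ : 0 < a₁)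
    (hco : Nat.Coprime a₁ a₂) :
    {x : ℕ | a₃ * x ∈ numSg a₁ a₂} =
      {x : ℕ | ((x * a₃ * modInv a₂ a₁) % a₁) * a₂ ≤ x * a₃} := by
  ext x
  rw [Set.mem_ofPred_eq, mem_numSg_iff ha₁ hco, mul_comm a₃ x]
  rfl

/-- Let `a₁, a₂` be coprime positive integers and `a₃` a positive integer coprime
to `a₁`.  Then `⟨a₁,a₂⟩/a₃ = {x ∈ ℕ : [x·a₃·a₂⁻¹]_{a₁}·a₂ ≤ x·a₃}`. -/
theorem stmt2 (a₁ a₂ a₃ : ℕ) (ha₁ : 0 < a₁) (ha₂ : 0 < a₂) (ha₃ : 0 < a₃)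
    (hco : Nat.Coprime a₁ a₂) (hco' : Nat.Coprime a₁ a₃) :
    {x : ℕ | a₃ * x ∈ numSg a₁ a₂} =
      {x : ℕ | ((x * a₃ * modInv a₂ a₁) % a₁) * a₂ ≤ x * a₃} :=
  stmt2_general a₁ a₂ a₃ ha₁ hco
end

section
/- Let a₁,a₂,a₃ be pairwise coprime positive integers with a₁ > a₂ > a₃ > 1. Then for every {j,k} = {2,3} (i.e. for (j,k) = (2,3) and (j,k) = (3,2)), one has τ_j(S_k) = { [μ·a₁·a_k⁻¹]_{a_j} : μ an integer with 0 < μ < a_j and μ ∉ τ_j(S₁) }. -/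
/-- `Sq b c k` : the quotient `⟨b,c⟩ / k = {x ∈ ℕ : kx ∈ ⟨b,c⟩}`. -/
def Sq (b c k : ℕ) : Set ℕ := {x : ℕ | k * x ∈ numSg b c}
/-- `τ_j(S_i) = S_i ∩ (0, a_j)`. -/
def tauSet (S : Set ℕ) (aj : ℕ) : Set ℕ := S ∩ Set.Ioo 0 aj

lemma Sq_comm (b c k : ℕ) : Sq b c k = Sq c b k := by
  unfold Sq numSg
  ext x
  constructor <;> rintro ⟨p, q, h⟩ <;> exact ⟨q, p, by omega⟩

noncomputable def mu (A B n x : ℕ) : ℕ := (((x * B : ℕ) : ZMod n) * (A : ZMod n)⁻¹).val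

lemma mu_lt (A B n x : ℕ) [NeZero n] : mu A B n x < n := ZMod.val_lt _

lemma mu_cast (A B n x : ℕ) [NeZero n] (hAn : Nat.Coprime A n) :
    ((mu A B n x : ℕ) : ZMod n) * A = ((x * B : ℕ) : ZMod n) := by
  unfold mu
  rw [ZMod.natCast_val, ZMod.cast_id, mul_assoc,
    ZMod.inv_mul_of_unit _ ((ZMod.isUnit_iff_coprime A n).mpr hAn), mul_one]

lemma sq_iff (A B n x : ℕ) [NeZero n] (hAn : Nat.Coprime A n) :
    x ∈ Sq A n B ↔ mu A B n x * A ≤ B * x := by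
  constructor
  · rintro ⟨p, q, h⟩
    have hcast : ((x * B : ℕ) : ZMod n) = ((p : ℕ) : ZMod n) * A := by
      have h2 : ((B * x : ℕ) : ZMod n) = ((p * A + q * n : ℕ) : ZMod n) := by rw [h]
      push_cast at h2 ⊢
      simp [ZMod.natCast_self] at h2
      rw [mul_comm (x : ZMod n)]
      simpa using h2
    have hp : mu A B n x = p % n := by
      unfold mu
      rw [hcast, mul_assoc,
        ZMod.mul_inv_of_unit _ ((ZMod.isUnit_iff_coprime A n).mpr hAn), mul_one,
        ZMod.val_natCast]
    have hle : mu A B n x ≤ p := hp ▸ Nat.mod_le p n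
    have : mu A B n x * A ≤ p * A := Nat.mul_le_mul_right _ hle
    omega
  · intro hle
    have hc : ((mu A B n x * A : ℕ) : ZMod n) = ((B * x : ℕ) : ZMod n) := by
      push_cast
      rw [mu_cast A B n x hAn]
      push_cast
      ring
    have hmod : mu A B n x * A ≡ B * x [MOD n] := (ZMod.natCast_eq_natCast_iff _ _ _).mp hc
    have hd : n ∣ B * x - mu A B n x * A := (Nat.modEq_iff_dvd' hle).mp hmod
    obtain ⟨q, hq⟩ := hd
    have hq' : B * x - mu A B n x * A = q * n := by rw [hq]; ring
    exact ⟨mu A B n x, q, by omega⟩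

lemma mu_pos (A B n x : ℕ) [NeZero n] (hAn : Nat.Coprime A n) (hBn : Nat.Coprime B n)
    (hx : 0 < x) (hxn : x < n) : 0 < mu A B n x := by
  rcases Nat.eq_zero_or_pos (mu A B n x) with h0 | h
  · exfalso
    have : ((x * B : ℕ) : ZMod n) = 0 := by
      rw [← mu_cast A B n x hAn, h0]
      simp
    have hdvd : n ∣ x * B := (ZMod.natCast_eq_zero_iff _ _).mp this
    have : n ∣ x := (Nat.Coprime.dvd_of_dvd_mul_right (hBn.symm)) hdvd
    have := Nat.le_of_dvd hx this
    omega
  · exact h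

lemma mu_mu (A B n x : ℕ) [NeZero n] (hAn : Nat.Coprime A n) (hBn : Nat.Coprime B n)
    (hxn : x < n) : mu B A n (mu A B n x) = x := by
  have h1 := mu_cast A B n x hAn
  show ((((mu A B n x * A : ℕ)) : ZMod n) * (B : ZMod n)⁻¹).val = x
  rw [Nat.cast_mul, h1, Nat.cast_mul, mul_assoc,
    ZMod.mul_inv_of_unit _ ((ZMod.isUnit_iff_coprime B n).mpr hBn), mul_one,
    ZMod.val_cast_of_lt hxn]

lemma mu_ne (A B n x : ℕ) (hAB : Nat.Coprime A B) (hx : 0 < x) (hxA : x < A) :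
    mu A B n x * A ≠ B * x := by
  intro h
  have hdvd : A ∣ B * x := ⟨mu A B n x, by rw [← h]; ring⟩
  have : A ∣ x := (Nat.Coprime.dvd_of_dvd_mul_left hAB) hdvd
  have := Nat.le_of_dvd hx this
  omega

lemma modInv_form (A B n μ : ℕ) [NeZero n] : (μ * A * modInv B n) % n = mu B A n μ := by
  unfold mu modInv
  rw [← ZMod.val_natCast]
  congr 1
  push_cast
  rw [ZMod.natCast_val, ZMod.cast_id]

lemma master (A B n : ℕ) (hAn : Nat.Coprime A n) (hAB : Nat.Coprime A B)
    (hBn : Nat.Coprime B n) (hnA : n < A) (hn : 0 < n) :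
    tauSet (Sq A n B) n =
      {y : ℕ | ∃ μ : ℕ, μ ∈ Set.Ioo 0 n \ tauSet (Sq B n A) n ∧
        y = (μ * A * modInv B n) % n} := by
  have : NeZero n := ⟨hn.ne'⟩
  ext x
  simp only [tauSet, Set.mem_inter_iff, Set.mem_setOf_eq, Set.mem_diff, Set.mem_Ioo]
  constructor
  · rintro ⟨hxS, hx0, hxn⟩
    have hle : mu A B n x * A ≤ B * x := (sq_iff A B n x hAn).mp hxS
    have hne : mu A B n x * A ≠ B * x := mu_ne A B n x hAB hx0 (by omega)
    refine ⟨mu A B n x, ⟨⟨mu_pos A B n x hAn hBn hx0 hxn, mu_lt A B n x⟩, ?_⟩, ?_⟩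
    · rintro ⟨hμS, _, _⟩
      have := (sq_iff B A n (mu A B n x) hBn).mp hμS
      rw [mu_mu A B n x hAn hBn hxn] at this
      have e1 : x * B = B * x := mul_comm _ _
      have e2 : A * mu A B n x = mu A B n x * A := mul_comm _ _
      omega
    · rw [modInv_form, mu_mu A B n x hAn hBn hxn]
  · rintro ⟨μ, ⟨⟨hμ0, hμn⟩, hμnot⟩, hy⟩
    rw [modInv_form] at hy
    subst hy
    have hx0 : 0 < mu B A n μ := mu_pos B A n μ hBn hAn hμ0 hμn
    have hxn : mu B A n μ < n := mu_lt B A n μ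
    have hμS : ¬ (mu B A n μ * B ≤ A * μ) := by
      intro hle
      exact hμnot ⟨(sq_iff B A n μ hBn).mpr hle, hμ0, hμn⟩
    refine ⟨(sq_iff A B n _ hAn).mpr ?_, hx0, hxn⟩
    rw [mu_mu B A n μ hBn hAn hμn]
    have e1 : μ * A = A * μ := mul_comm _ _
    have e2 : B * mu B A n μ = mu B A n μ * B := mul_comm _ _
    omega

/-- Theorem 3(1): for pairwise coprime `a₁ > a₂ > a₃ > 1` and each
`{j,k} = {2,3}`, `τ_j(S_k) = {[μ·a₁·a_k⁻¹]_{a_j} : 0 < μ < a_j, μ ∉ τ_j(S₁)}`. -/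
theorem stmt3 (a₁ a₂ a₃ : ℕ)
    (h12 : Nat.Coprime a₁ a₂) (h13 : Nat.Coprime a₁ a₃) (h23 : Nat.Coprime a₂ a₃)
    (hgt : a₁ > a₂ ∧ a₂ > a₃ ∧ a₃ > 1) :
    tauSet (Sq a₁ a₂ a₃) a₂ =
        {y : ℕ | ∃ μ : ℕ, μ ∈ Set.Ioo 0 a₂ \ tauSet (Sq a₂ a₃ a₁) a₂ ∧
          y = (μ * a₁ * modInv a₃ a₂) % a₂} ∧
    tauSet (Sq a₁ a₃ a₂) a₃ =
        {y : ℕ | ∃ μ : ℕ, μ ∈ Set.Ioo 0 a₃ \ tauSet (Sq a₂ a₃ a₁) a₃ ∧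
          y = (μ * a₁ * modInv a₂ a₃) % a₃} := by
  obtain ⟨h1, h2, h3⟩ := hgt
  constructor
  · rw [Sq_comm a₂ a₃ a₁]
    exact master a₁ a₃ a₂ h12 h13 h23.symm (by omega) (by omega)
  · exact master a₁ a₂ a₃ h13 h12 h23 (by omega) (by omega)
end

section
/- Let a₁,a₂,a₃ be pairwise coprime positive integers with a₁ > a₂ > a₃ > 1. Then for every {j,k} = {2,3} (i.e. for (j,k) = (2,3) and (j,k) = (3,2)), the cardinalities satisfy |τ_j(S_k)| = a_j − 1 − |τ_j(S₁)|. -/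
lemma numSg_comm (a b : ℕ) : numSg a b = numSg b a := by
  ext x
  constructor <;> rintro ⟨p, q, rfl⟩ <;> exact ⟨q, p, by ring⟩

/-- the map `x ↦ (c·x·a⁻¹ mod b)`. -/
noncomputable def Fm (a b c x : ℕ) : ℕ := ((c : ZMod b) * (x : ZMod b) * (a : ZMod b)⁻¹).val

lemma Fm_modeq (a b c x : ℕ) (hb : 1 < b) (hab : Nat.Coprime a b) :
    a * Fm a b c x ≡ c * x [MOD b] := by
  haveI : NeZero b := ⟨by omega⟩
  have ha : (a : ZMod b) * (a : ZMod b)⁻¹ = 1 :=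
    ZMod.mul_inv_of_unit _ ((ZMod.isUnit_iff_coprime a b).mpr hab)
  have : ((a * Fm a b c x : ℕ) : ZMod b) = ((c * x : ℕ) : ZMod b) := by
    push_cast
    rw [Fm, ZMod.natCast_zmod_val]
    calc (a : ZMod b) * ((c : ZMod b) * x * (a : ZMod b)⁻¹)
        = (c : ZMod b) * x * ((a : ZMod b) * (a : ZMod b)⁻¹) := by ring
      _ = (c : ZMod b) * x := by rw [ha, mul_one]
  exact (ZMod.natCast_eq_natCast_iff _ _ _).mp this

lemma Fm_mem_Ioo (a b c x : ℕ) (hb : 1 < b) (hab : Nat.Coprime a b)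
    (hbc : Nat.Coprime b c) (hx : x ∈ Set.Ioo 0 b) : Fm a b c x ∈ Set.Ioo 0 b := by
  haveI : NeZero b := ⟨by omega⟩
  refine ⟨?_, ZMod.val_lt _⟩
  rcases Nat.eq_zero_or_pos (Fm a b c x) with h | h
  · exfalso
    have hmod := Fm_modeq a b c x hb hab
    rw [h, Nat.mul_zero] at hmod
    have hd : b ∣ c * x := Nat.modEq_zero_iff_dvd.mp hmod.symm
    have hbx : b ∣ x := hbc.dvd_of_dvd_mul_left hd
    have h1 := Nat.le_of_dvd hx.1 hbx
    have h2 := hx.2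
    omega
  · exact h

/-- The key dichotomy. -/
lemma key (a b c x : ℕ) (hab : Nat.Coprime a b) (hac : Nat.Coprime a c)
    (hbc : Nat.Coprime b c) (hba : b < a) (hb : 1 < b) (hx : x ∈ Set.Ioo 0 b) :
    c * x ∈ numSg a b ↔ ¬ (a * Fm a b c x ∈ numSg b c) := by
  set p := Fm a b c x with hp
  have hplt : p < b := (Fm_mem_Ioo a b c x hb hab hbc hx).2
  have hmod : a * p ≡ c * x [MOD b] := Fm_modeq a b c x hb hab
  obtain ⟨m, hm⟩ : (b : ℤ) ∣ (c * x : ℤ) - (a * p : ℤ) := by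
    have := hmod.dvd
    push_cast at this ⊢
    exact this
  -- m ≠ 0
  have hm0 : m ≠ 0 := by
    rintro rfl
    rw [mul_zero, sub_eq_zero] at hm
    have heq : c * x = a * p := by exact_mod_cast hm
    have hdvd : a ∣ c * x := ⟨p, heq⟩
    have hax : a ∣ x := hac.dvd_of_dvd_mul_left hdvd
    have h1 := Nat.le_of_dvd hx.1 hax
    have h2 := hx.2
    omega
  have hbpos : (0 : ℤ) < b := by exact_mod_cast Nat.lt_of_lt_of_le Nat.zero_lt_one hb.le
  -- c*x ∈ ⟨a,b⟩ ↔ 0 ≤ m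
  have hiff1 : c * x ∈ numSg a b ↔ 0 ≤ m := by
    constructor
    · rintro ⟨P, Q, hPQ⟩
      have h1 : a * P ≡ a * p [MOD b] := by
        have hcx : a * P ≡ c * x [MOD b] := by
          show (a * P) % b = (c * x) % b
          rw [hPQ, show P * a + Q * b = a * P + Q * b from by ring,
            Nat.add_mul_mod_self_right]
        exact hcx.trans hmod.symm
      have h2 : P ≡ p [MOD b] := Nat.ModEq.cancel_left_of_coprime hab.symm h1
      have hple : p ≤ P := by
        have hPp : P % b = p % b := h2
        have := Nat.mod_le P b
        rw [Nat.mod_eq_of_lt hplt] at hPp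
        omega
      have hbm : (b : ℤ) * m = a * ((P : ℤ) - p) + b * Q := by
        have h3 : (c : ℤ) * x = (P : ℤ) * a + (Q : ℤ) * b := by exact_mod_cast hPQ
        rw [← hm, h3]; ring
      have e1 : 0 ≤ (a : ℤ) * ((P : ℤ) - p) :=
        mul_nonneg (by positivity) (by exact_mod_cast sub_nonneg.mpr (show (p:ℤ) ≤ P by exact_mod_cast hple))
      have e2 : 0 ≤ (b : ℤ) * (Q : ℤ) := by positivity
      have h5 : (b : ℤ) * 0 ≤ (b : ℤ) * m := by rw [mul_zero]; linarith
      exact le_of_mul_le_mul_left h5 hbpos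
    · intro hm'
      refine ⟨p, m.toNat, ?_⟩
      have hcast : (c * x : ℤ) = (p : ℤ) * a + (m.toNat : ℤ) * b := by
        rw [Int.toNat_of_nonneg hm']; linarith [hm]
      exact_mod_cast hcast
  have hiff2 : a * p ∈ numSg b c ↔ m ≤ 0 := by
    constructor
    · rintro ⟨α, β, hαβ⟩
      have h1 : β * c ≡ x * c [MOD b] := by
        have ha1 : β * c ≡ a * p [MOD b] := by
          show (β * c) % b = (a * p) % b
          rw [hαβ, show α * b + β * c = β * c + α * b from by ring,
            Nat.add_mul_mod_self_right]
        refine ha1.trans (hmod.trans ?_)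
        rw [mul_comm c x]
      have h2 : β ≡ x [MOD b] := Nat.ModEq.cancel_right_of_coprime hbc h1
      have hxle : x ≤ β := by
        have hβx : β % b = x % b := h2
        have := Nat.mod_le β b
        rw [Nat.mod_eq_of_lt hx.2] at hβx
        omega
      have hbm : (b : ℤ) * (-m) = α * b + c * ((β : ℤ) - x) := by
        have h3 : ((a * p : ℕ) : ℤ) = (α : ℤ) * b + (β : ℤ) * c := by exact_mod_cast hαβ
        push_cast at h3
        rw [show (b:ℤ) * (-m) = -((b:ℤ)*m) from by ring, ← hm]
        linarith [h3]
      have e1 : 0 ≤ (c : ℤ) * ((β : ℤ) - x) :=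
        mul_nonneg (by positivity) (sub_nonneg.mpr (by exact_mod_cast hxle))
      have e2 : 0 ≤ (α : ℤ) * (b : ℤ) := by positivity
      have h5 : (b : ℤ) * m ≤ (b : ℤ) * 0 := by rw [mul_zero]; linarith
      exact le_of_mul_le_mul_left h5 hbpos
    · intro hm'
      refine ⟨(-m).toNat, x, ?_⟩
      have hcast : ((a * p : ℕ) : ℤ) = ((-m).toNat : ℤ) * b + (x : ℤ) * c := by
        rw [Int.toNat_of_nonneg (by omega)]; push_cast; linarith [hm]
      exact_mod_cast hcast
  rw [hiff1, hiff2]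
  omega

lemma Fm_inv (a b c y : ℕ) (hb : 1 < b) (hab : Nat.Coprime a b) (hcb : Nat.Coprime c b)
    (hy : y ∈ Set.Ioo 0 b) : Fm a b c (Fm c b a y) = y := by
  haveI : NeZero b := ⟨by omega⟩
  have ha : (a : ZMod b) * (a : ZMod b)⁻¹ = 1 :=
    ZMod.mul_inv_of_unit _ ((ZMod.isUnit_iff_coprime a b).mpr hab)
  have hc : (c : ZMod b) * (c : ZMod b)⁻¹ = 1 :=
    ZMod.mul_inv_of_unit _ ((ZMod.isUnit_iff_coprime c b).mpr hcb)
  unfold Fm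
  rw [ZMod.natCast_zmod_val]
  have : (c : ZMod b) * ((a : ZMod b) * y * (c : ZMod b)⁻¹) * (a : ZMod b)⁻¹
      = (y : ZMod b) * ((a : ZMod b) * (a : ZMod b)⁻¹) * ((c : ZMod b) * (c : ZMod b)⁻¹) := by
    ring
  rw [this, ha, hc, mul_one, mul_one, ZMod.val_cast_of_lt hy.2]

/-- Main counting lemma. -/
lemma main_count (a b c : ℕ) (hab : Nat.Coprime a b) (hac : Nat.Coprime a c)
    (hbc : Nat.Coprime b c) (hba : b < a) (hb : 1 < b) :
    (tauSet (Sq a b c) b).ncard = b - 1 - (tauSet (Sq b c a) b).ncard := by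
  set A : Set ℕ := tauSet (Sq a b c) b with hA
  set B : Set ℕ := tauSet (Sq b c a) b with hB
  have hAsub : A ⊆ Set.Ioo 0 b := fun x hx => hx.2
  have hBsub : B ⊆ Set.Ioo 0 b := fun x hx => hx.2
  have hIoofin : (Set.Ioo (0:ℕ) b).Finite := Set.finite_Ioo 0 b
  -- injectivity of Fm on Ioo
  have hinj : Set.InjOn (Fm a b c) (Set.Ioo 0 b) := by
    intro x hxm y hym hxy
    have h1 := Fm_modeq a b c x hb hab
    have h2 := Fm_modeq a b c y hb hab
    rw [hxy] at h1
    have h3 : c * x ≡ c * y [MOD b] := h1.symm.trans h2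
    have h4 : x ≡ y [MOD b] := Nat.ModEq.cancel_left_of_coprime hbc h3
    unfold Nat.ModEq at h4
    rw [Nat.mod_eq_of_lt hxm.2, Nat.mod_eq_of_lt hym.2] at h4
    exact h4
  -- image
  have himg : Fm a b c '' A = Set.Ioo 0 b \ B := by
    ext y
    constructor
    · rintro ⟨x, hxA, rfl⟩
      have hxm := hAsub hxA
      refine ⟨Fm_mem_Ioo a b c x hb hab hbc hxm, ?_⟩
      intro hFB
      exact (key a b c x hab hac hbc hba hb hxm).mp hxA.1 hFB.1
    · rintro ⟨hym, hyB⟩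
      refine ⟨Fm c b a y, ?_, Fm_inv a b c y hb hab hbc.symm hym⟩
      have hxm : Fm c b a y ∈ Set.Ioo 0 b :=
        Fm_mem_Ioo c b a y hb hbc.symm
          hab.symm hym
      refine ⟨?_, hxm⟩
      have hk := key a b c (Fm c b a y) hab hac hbc hba hb hxm
      rw [Fm_inv a b c y hb hab hbc.symm hym] at hk
      exact hk.mpr (fun h => hyB ⟨h, hym⟩)
  have hcardIoo : (Set.Ioo (0:ℕ) b).ncard = b - 1 := by
    rw [← Finset.coe_Ioo, Set.ncard_coe_finset, Nat.card_Ioo]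
    omega
  calc A.ncard = (Fm a b c '' A).ncard :=
        (Set.ncard_image_of_injOn (hinj.mono hAsub)).symm
    _ = (Set.Ioo 0 b \ B).ncard := by rw [himg]
    _ = (Set.Ioo (0:ℕ) b).ncard - B.ncard :=
        Set.ncard_diff hBsub (hIoofin.subset hBsub)
    _ = b - 1 - B.ncard := by rw [hcardIoo]

/-- Theorem 3(2): for pairwise coprime `a₁ > a₂ > a₃ > 1` and each
`{j,k} = {2,3}`, `|τ_j(S_k)| = a_j − 1 − |τ_j(S₁)|`. -/
theorem stmt4 (a₁ a₂ a₃ : ℕ)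
    (h12 : Nat.Coprime a₁ a₂) (h13 : Nat.Coprime a₁ a₃) (h23 : Nat.Coprime a₂ a₃)
    (hgt : a₁ > a₂ ∧ a₂ > a₃ ∧ a₃ > 1) :
    (tauSet (Sq a₁ a₂ a₃) a₂).ncard = a₂ - 1 - (tauSet (Sq a₂ a₃ a₁) a₂).ncard ∧
    (tauSet (Sq a₁ a₃ a₂) a₃).ncard = a₃ - 1 - (tauSet (Sq a₂ a₃ a₁) a₃).ncard := by
  obtain ⟨h1, h2, h3⟩ := hgt
  have hSq : Sq a₃ a₂ a₁ = Sq a₂ a₃ a₁ := by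
    unfold Sq; rw [numSg_comm]
  constructor
  · exact main_count a₁ a₂ a₃ h12 h13 h23 h1 (by omega)
  · have := main_count a₁ a₃ a₂ h13 h12 (Nat.coprime_comm.mp h23) (by omega) h3
    rwa [hSq] at this
end

section
/- Let a₁,a₂,a₃ be pairwise coprime positive integers such that L_i > 1 for every i = 1,2,3. Then for every {i,j,k} = {1,2,3} there exists a unique pair of nonnegative integers (x_{ij}, x_{ik}) satisfying L_i·a_i = x_{ij}·a_j + x_{ik}·a_k. -/
/-- `Lval a b c` is the least positive integer `x` with `x*a ∈ ⟨b,c⟩`. -/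
noncomputable def Lval (a b c : ℕ) : ℕ := sInf {x : ℕ | 0 < x ∧ x * a ∈ numSg b c}

lemma Lval_mem (a b c : ℕ) (hb : 0 < b) :
    0 < Lval a b c ∧ Lval a b c * a ∈ numSg b c := by
  have hne : {x : ℕ | 0 < x ∧ x * a ∈ numSg b c}.Nonempty :=
    ⟨b, hb, a, 0, by ring⟩
  exact Nat.sInf_mem hne

/-- No representation of `L·a₁` can have the `a₃`-coefficient `≥ a₂`. -/
lemma no_big_rep (a₁ a₂ a₃ : ℕ) (ha₂ : 0 < a₂) (h23 : Nat.Coprime a₂ a₃)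
    (hL : 1 < Lval a₁ a₂ a₃) (P Q : ℕ) (hQ : a₂ ≤ Q)
    (hrep : Lval a₁ a₂ a₃ * a₁ = P * a₂ + Q * a₃) : False := by
  haveI : NeZero a₂ := ⟨ha₂.ne'⟩
  have hLs : Lval a₁ a₂ a₃ = sInf {x : ℕ | 0 < x ∧ x * a₁ ∈ numSg a₂ a₃} := rfl
  set L := Lval a₁ a₂ a₃ with hLdef
  set L' := L - 1 with hL'def
  have hL'pos : 0 < L' := by omega
  have hL'lt : L' < L := by omega
  set u : (ZMod a₂)ˣ := ZMod.unitOfCoprime a₃ h23.symm with hu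
  set qs : ℕ := (((L' * a₁ : ℕ) : ZMod a₂) * ↑u⁻¹).val with hqs
  have hqslt : qs < a₂ := ZMod.val_lt _
  have hmod : qs * a₃ ≡ L' * a₁ [MOD a₂] := by
    apply (ZMod.natCast_eq_natCast_iff _ _ _).mp
    push_cast
    have hcast : ((qs : ℕ) : ZMod a₂) = ((L' * a₁ : ℕ) : ZMod a₂) * ↑u⁻¹ := by
      rw [hqs]; exact ZMod.natCast_rightInverse _
    rw [hcast]
    have ha₃u : (a₃ : ZMod a₂) = ↑u := (ZMod.coe_unitOfCoprime a₃ h23.symm).symm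
    rw [ha₃u, mul_assoc, Units.inv_mul, mul_one]
    push_cast
    ring
  -- minimality of L forces (L-1)*a₁ < qs*a₃
  have h2 : L' * a₁ < qs * a₃ := by
    by_contra hge
    push_neg at hge
    have hdvd : a₂ ∣ L' * a₁ - qs * a₃ := (Nat.modEq_iff_dvd' hge).mp hmod
    obtain ⟨k, hk⟩ := hdvd
    have hmem : L' ∈ {x : ℕ | 0 < x ∧ x * a₁ ∈ numSg a₂ a₃} := by
      refine ⟨hL'pos, k, qs, ?_⟩
      rw [Nat.mul_comm k a₂]; omega
    have := Nat.sInf_le hmem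
    omega
  have hQqs : qs ≤ Q := by omega
  set D := Q - qs with hD
  have hQ3 : Q * a₃ = D * a₃ + qs * a₃ := by
    rw [← Nat.add_mul]; congr 1; omega
  have e1 : a₁ + L' * a₁ = P * a₂ + Q * a₃ := by
    have hL1 : L = L' + 1 := by omega
    calc a₁ + L' * a₁ = (L' + 1) * a₁ := by ring
    _ = L * a₁ := by rw [← hL1]
    _ = P * a₂ + Q * a₃ := hrep
  have full : a₁ + qs * a₃ ≡ D * a₃ + qs * a₃ [MOD a₂] := by
    calc a₁ + qs * a₃ ≡ a₁ + L' * a₁ [MOD a₂] := (Nat.ModEq.refl _).add hmod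
    _ = P * a₂ + Q * a₃ := e1
    _ ≡ Q * a₃ [MOD a₂] := by
        show (P * a₂ + Q * a₃) % a₂ = (Q * a₃) % a₂
        rw [Nat.add_comm, Nat.add_mul_mod_self_right]
    _ = D * a₃ + qs * a₃ := hQ3
  have hmod2 : D * a₃ ≡ a₁ [MOD a₂] :=
    (Nat.ModEq.add_right_cancel' _ full).symm
  have hlt : D * a₃ < a₁ := by omega
  have hdvd2 : a₂ ∣ a₁ - D * a₃ := (Nat.modEq_iff_dvd' hlt.le).mp hmod2
  obtain ⟨m, hm⟩ := hdvd2
  have h1mem : (1 : ℕ) ∈ {x : ℕ | 0 < x ∧ x * a₁ ∈ numSg a₂ a₃} := by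
    refine ⟨one_pos, m, D, ?_⟩
    rw [one_mul, Nat.mul_comm m a₂]; omega
  have := Nat.sInf_le h1mem
  omega

/-- Two distinct representations force one with `a₃`-coefficient `≥ a₂`. -/
lemma big_of_two (a₂ a₃ p q p' q' : ℕ) (ha₃ : 0 < a₃) (h23 : Nat.Coprime a₂ a₃)
    (heq : p * a₂ + q * a₃ = p' * a₂ + q' * a₃) (hlt : p' < p) : a₂ ≤ q' := by
  have h1 : p' * a₂ ≤ p * a₂ := Nat.mul_le_mul_right _ hlt.le
  have hsub : (p - p') * a₂ = (q' - q) * a₃ := by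
    rw [Nat.sub_mul, Nat.sub_mul]; omega
  have hdvd : a₃ ∣ (p - p') := by
    apply (Nat.Coprime.dvd_of_dvd_mul_right h23.symm)
    exact ⟨q' - q, by rw [hsub]; ring⟩
  obtain ⟨t, ht⟩ := hdvd
  have ht1 : 1 ≤ t := by
    rcases Nat.eq_zero_or_pos t with h | h
    · subst h; simp at ht; omega
    · exact h
  have hqq : q' - q = t * a₂ := by
    have h3 : a₃ * (q' - q) = a₃ * (t * a₂) := by
      rw [ht] at hsub
      calc a₃ * (q' - q) = (q' - q) * a₃ := by ring
      _ = a₃ * t * a₂ := hsub.symm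
      _ = a₃ * (t * a₂) := by ring
    exact (Nat.eq_of_mul_eq_mul_left ha₃ h3)
  have : a₂ ≤ t * a₂ := Nat.le_mul_of_pos_left a₂ ht1
  omega

lemma key_s6 (a₁ a₂ a₃ : ℕ) (ha₂ : 0 < a₂) (ha₃ : 0 < a₃) (h23 : Nat.Coprime a₂ a₃)
    (hL : 1 < Lval a₁ a₂ a₃) :
    ∃! p : ℕ × ℕ, Lval a₁ a₂ a₃ * a₁ = p.1 * a₂ + p.2 * a₃ := by
  obtain ⟨hpos, p₀, q₀, hrep⟩ := Lval_mem a₁ a₂ a₃ ha₂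
  refine ⟨(p₀, q₀), hrep, ?_⟩
  rintro ⟨p, q⟩ hpq
  simp only [Prod.mk.injEq]
  by_contra hne
  have heq : p * a₂ + q * a₃ = p₀ * a₂ + q₀ * a₃ := by rw [← hpq, ← hrep]
  have hp : p ≠ p₀ := by
    intro h; subst h
    have : q * a₃ = q₀ * a₃ := by omega
    have : q = q₀ := Nat.eq_of_mul_eq_mul_right ha₃ this
    tauto
  rcases Nat.lt_or_ge p p₀ with h | h
  · exact no_big_rep a₁ a₂ a₃ ha₂ h23 hL p q
      (big_of_two a₂ a₃ p₀ q₀ p q ha₃ h23 heq.symm h) hpq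
  · have h' : p₀ < p := lt_of_le_of_ne h (Ne.symm hp)
    exact no_big_rep a₁ a₂ a₃ ha₂ h23 hL p₀ q₀
      (big_of_two a₂ a₃ p q p₀ q₀ ha₃ h23 heq h') hrep

lemma key_swap (a₁ a₂ a₃ : ℕ) (ha₂ : 0 < a₂) (ha₃ : 0 < a₃) (h23 : Nat.Coprime a₂ a₃)
    (hL : 1 < Lval a₁ a₂ a₃) :
    ∃! p : ℕ × ℕ, Lval a₁ a₂ a₃ * a₁ = p.1 * a₃ + p.2 * a₂ := by
  obtain ⟨⟨p₀, q₀⟩, hrep, huniq⟩ := key_s6 a₁ a₂ a₃ ha₂ ha₃ h23 hL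
  refine ⟨(q₀, p₀), by simpa [Nat.add_comm] using hrep, ?_⟩
  rintro ⟨x, y⟩ hxy
  have := huniq (y, x) (by simpa [Nat.add_comm] using hxy)
  simp only [Prod.mk.injEq] at this ⊢
  tauto

/-- If `a₁,a₂,a₃` are pairwise coprime positive integers with `L_i > 1` for all
`i`, then for every `{i,j,k} = {1,2,3}` the pair `(x_{ij}, x_{ik})` of
nonnegative integers with `L_i·a_i = x_{ij}·a_j + x_{ik}·a_k` exists and is
unique.  (All six permutations are listed.) -/
theorem stmt6 (a₁ a₂ a₃ : ℕ) (ha₁ : 0 < a₁) (ha₂ : 0 < a₂) (ha₃ : 0 < a₃)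
    (h12 : Nat.Coprime a₁ a₂) (h13 : Nat.Coprime a₁ a₃) (h23 : Nat.Coprime a₂ a₃)
    (hL₁ : 1 < Lval a₁ a₂ a₃) (hL₂ : 1 < Lval a₂ a₁ a₃) (hL₃ : 1 < Lval a₃ a₁ a₂) :
    (∃! p : ℕ × ℕ, Lval a₁ a₂ a₃ * a₁ = p.1 * a₂ + p.2 * a₃) ∧
    (∃! p : ℕ × ℕ, Lval a₁ a₂ a₃ * a₁ = p.1 * a₃ + p.2 * a₂) ∧
    (∃! p : ℕ × ℕ, Lval a₂ a₁ a₃ * a₂ = p.1 * a₁ + p.2 * a₃) ∧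
    (∃! p : ℕ × ℕ, Lval a₂ a₁ a₃ * a₂ = p.1 * a₃ + p.2 * a₁) ∧
    (∃! p : ℕ × ℕ, Lval a₃ a₁ a₂ * a₃ = p.1 * a₁ + p.2 * a₂) ∧
    (∃! p : ℕ × ℕ, Lval a₃ a₁ a₂ * a₃ = p.1 * a₂ + p.2 * a₁) := by
  exact ⟨key_s6 a₁ a₂ a₃ ha₂ ha₃ h23 hL₁,
    key_swap a₁ a₂ a₃ ha₂ ha₃ h23 hL₁,
    key_s6 a₂ a₁ a₃ ha₁ ha₃ h13 hL₂,
    key_swap a₂ a₁ a₃ ha₁ ha₃ h13 hL₂,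
    key_s6 a₃ a₁ a₂ ha₁ ha₂ h12 hL₃,
    key_swap a₃ a₁ a₂ ha₁ ha₂ h12 hL₃⟩
end

section
/- Let a₁,a₂,a₃ be pairwise coprime positive integers, each greater than 1, such that L_i > 1 for every i = 1,2,3, and for {i,j,k}={1,2,3} let x_{ij}, x_{ik} be the unique nonnegative integers with L_i·a_i = x_{ij}·a_j + x_{ik}·a_k. Then for every {i,j,k} = {1,2,3}, g(a₁,a₂,a₃) = L_i·a_i + max{x_{jk}·a_k, x_{kj}·a_j} − a₁ − a₂ − a₃. -/
/-- The numerical semigroup generated by `a`, `b`, `c`. -/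
def numSg3 (a b c : ℕ) : Set ℕ := {x | ∃ p q r : ℕ, x = p * a + q * b + r * c}



lemma Lval_comm (a b c : ℕ) : Lval a b c = Lval a c b := by
  unfold Lval; rw [numSg_comm]

lemma Lval_le {a b c : ℕ} {m : ℕ} (hm : 0 < m) (h : m * a ∈ numSg b c) : Lval a b c ≤ m :=
  Nat.sInf_le ⟨hm, h⟩

lemma Lval_pos (a b c : ℕ) (hb : 0 < b) : 0 < Lval a b c := by
  have hne : {x : ℕ | 0 < x ∧ x * a ∈ numSg b c}.Nonempty := ⟨b, hb, ⟨a, 0, by ring⟩⟩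
  exact (Nat.sInf_mem hne).1

lemma numSg3_perm₁ (a b c : ℕ) : numSg3 a b c = numSg3 b a c := by
  ext x
  constructor <;> rintro ⟨p, q, r, rfl⟩ <;> exact ⟨q, p, r, by ring⟩

lemma numSg3_perm₂ (a b c : ℕ) : numSg3 a b c = numSg3 c a b := by
  ext x
  constructor <;> rintro ⟨p, q, r, rfl⟩
  · exact ⟨r, p, q, by ring⟩
  · exact ⟨q, r, p, by ring⟩


lemma xpos (a b c La Lb xab xac : ℕ) (hc : 1 < c)
    (hac : Nat.Coprime a c) (hbc : Nat.Coprime b c)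
    (minA : ∀ m, 0 < m → m * a ∈ numSg b c → La ≤ m)
    (minB : ∀ m, 0 < m → m * b ∈ numSg a c → Lb ≤ m)
    (hLa : 0 < La) (hLb : 1 < Lb)
    (h1 : La * a = xab * b + xac * c) : 0 < xab := by
  by_contra hx
  have hxab : xab = 0 := by omega
  subst hxab
  rw [zero_mul, zero_add] at h1
  have hdvd : c ∣ La := by
    have : c ∣ La * a := ⟨xac, by linarith [h1]⟩
    exact (Nat.Coprime.dvd_of_dvd_mul_right hac.symm this)
  have hLac : La = c := by
    have h2 : La ≤ c := minA c (by omega) ⟨0, a, by ring⟩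
    have h3 : c ≤ La := Nat.le_of_dvd hLa hdvd
    omega
  haveI : NeZero c := ⟨by omega⟩
  set w : ℕ := ((b : ZMod c) * (a : ZMod c)⁻¹).val with hwdef
  have hwlt : w < c := ZMod.val_lt _
  have haU : IsUnit ((a : ZMod c)) := (ZMod.isUnit_iff_coprime a c).2 hac
  have hkey : ((w * a : ℕ) : ZMod c) = (b : ℕ) := by
    push_cast
    rw [hwdef, ZMod.natCast_val, ZMod.cast_id]
    rw [mul_assoc, ZMod.inv_mul_of_unit _ haU, mul_one]
  have hmod : w * a ≡ b [MOD c] := (ZMod.natCast_eq_natCast_iff _ _ _).1 hkey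
  have hw0 : w ≠ 0 := by
    intro h0
    rw [h0, zero_mul] at hmod
    have : c ∣ b := (Nat.modEq_zero_iff_dvd).1 hmod.symm
    have : c ∣ 1 := by
      have := Nat.dvd_gcd this dvd_rfl
      rwa [Nat.Coprime.gcd_eq_one hbc] at this
    have := Nat.le_of_dvd one_pos this
    omega
  rcases le_total b (w * a) with hle | hle
  · have hd : c ∣ w * a - b := (Nat.modEq_iff_dvd' hle).1 hmod.symm
    obtain ⟨s, hs⟩ := hd
    have heq : w * a = 1 * b + s * c := by
      have h' : (w * a - b) + b = w * a := Nat.sub_add_cancel hle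
      rw [hs] at h'
      rw [one_mul, mul_comm s c]
      linarith
    have := minA w (by omega) ⟨1, s, heq⟩
    omega
  · have hd : c ∣ b - w * a := (Nat.modEq_iff_dvd' hle).1 hmod
    obtain ⟨s, hs⟩ := hd
    have heq : 1 * b = w * a + s * c := by
      have h' : (b - w * a) + w * a = b := Nat.sub_add_cancel hle
      rw [hs] at h'
      rw [one_mul, mul_comm s c]
      linarith
    have := minB 1 one_pos ⟨w, s, heq⟩
    omega


lemma cross (a b c La Lc xab xac xca xcb : ℕ) (hb : 0 < b)
    (hxab : 0 < xab) (hxac : 0 < xac) (hxca : 0 < xca)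
    (minA : ∀ m, 0 < m → m * a ∈ numSg b c → La ≤ m)
    (minC : ∀ m, 0 < m → m * c ∈ numSg a b → Lc ≤ m)
    (h1 : La * a = xab * b + xac * c)
    (h3 : Lc * c = xca * a + xcb * b) : xac < Lc ∧ xca < La := by
  rcases lt_or_ge xac Lc with hu | hu <;> rcases lt_or_ge xca La with hv | hv
  · exact ⟨hu, hv⟩
  · exfalso
    have heq : (Lc - xac) * c = (xca - La) * a + (xcb + xab) * b := by
      have hz : ((Lc - xac : ℕ) : ℤ) * c = ((xca - La : ℕ) : ℤ) * a + ((xcb + xab : ℕ) : ℤ) * b := by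
        push_cast [Nat.cast_sub hu.le, Nat.cast_sub hv]
        have e1 : ((La : ℤ)) * a = (xab : ℤ) * b + (xac : ℤ) * c := by exact_mod_cast h1
        have e3 : ((Lc : ℤ)) * c = (xca : ℤ) * a + (xcb : ℤ) * b := by exact_mod_cast h3
        linarith
      exact_mod_cast hz
    have := minC (Lc - xac) (by omega) ⟨xca - La, xcb + xab, heq⟩
    omega
  · exfalso
    have heq : (La - xca) * a = (xab + xcb) * b + (xac - Lc) * c := by
      have hz : ((La - xca : ℕ) : ℤ) * a = ((xab + xcb : ℕ) : ℤ) * b + ((xac - Lc : ℕ) : ℤ) * c := by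
        push_cast [Nat.cast_sub hv.le, Nat.cast_sub hu]
        have e1 : ((La : ℤ)) * a = (xab : ℤ) * b + (xac : ℤ) * c := by exact_mod_cast h1
        have e3 : ((Lc : ℤ)) * c = (xca : ℤ) * a + (xcb : ℤ) * b := by exact_mod_cast h3
        linarith
      exact_mod_cast hz
    have := minA (La - xca) (by omega) ⟨xab + xcb, xac - Lc, heq⟩
    omega
  · exfalso
    have e1 : ((La : ℤ)) * a = (xab : ℤ) * b + (xac : ℤ) * c := by exact_mod_cast h1
    have e3 : ((Lc : ℤ)) * c = (xca : ℤ) * a + (xcb : ℤ) * b := by exact_mod_cast h3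
    have c1 : ((Lc : ℤ)) * c ≤ (xac : ℤ) * c :=
      mul_le_mul_of_nonneg_right (by exact_mod_cast hu) (by positivity)
    have c2 : ((La : ℤ)) * a ≤ (xca : ℤ) * a :=
      mul_le_mul_of_nonneg_right (by exact_mod_cast hv) (by positivity)
    have c3 : (0 : ℤ) < (xab : ℤ) * b := by
      have := Nat.mul_pos hxab hb; exact_mod_cast this
    have c4 : (0 : ℤ) ≤ (xcb : ℤ) * b := by positivity
    linarith

set_option maxHeartbeats 1000000 in
lemma rel (a b c La Lb Lc xab xac xba xbc xca xcb : ℕ)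
    (ha : 0 < a) (hb : 0 < b) (hc : 0 < c)
    (hxab : 0 < xab) (hxac : 0 < xac) (hxba : 0 < xba) (hxbc : 0 < xbc)
    (hxca : 0 < xca) (hxcb : 0 < xcb)
    (bca : xca < La) (bac : xac < Lc) (babb : xab < Lb) (bcbb : xcb < Lb)
    (minA : ∀ m, 0 < m → m * a ∈ numSg b c → La ≤ m)
    (minB : ∀ m, 0 < m → m * b ∈ numSg a c → Lb ≤ m)
    (minC : ∀ m, 0 < m → m * c ∈ numSg a b → Lc ≤ m)
    (h1 : La * a = xab * b + xac * c)
    (h2 : Lb * b = xba * a + xbc * c)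
    (h3 : Lc * c = xca * a + xcb * b) :
    La = xba + xca ∧ Lb = xab + xcb ∧ Lc = xac + xbc := by
  have e1 : ((La : ℤ)) * a = (xab : ℤ) * b + (xac : ℤ) * c := by exact_mod_cast h1
  have e2 : ((Lb : ℤ)) * b = (xba : ℤ) * a + (xbc : ℤ) * c := by exact_mod_cast h2
  have e3 : ((Lc : ℤ)) * c = (xca : ℤ) * a + (xcb : ℤ) * b := by exact_mod_cast h3
  have hmem : (xab + xcb) * b = (La - xca) * a + (Lc - xac) * c := by
    have hz : ((xab + xcb : ℕ) : ℤ) * b = ((La - xca : ℕ) : ℤ) * a + ((Lc - xac : ℕ) : ℤ) * c := by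
      push_cast [Nat.cast_sub bca.le, Nat.cast_sub bac.le]
      linarith
    exact_mod_cast hz
  have hLb_le : Lb ≤ xab + xcb := minB _ (by omega) ⟨La - xca, Lc - xac, hmem⟩
  have htZ : ((xab + xcb - Lb : ℕ) : ℤ) = (xab : ℤ) + xcb - Lb := by omega
  set t : ℕ := xab + xcb - Lb with htdef
  have htlt : t < Lb := by omega
  have hZ : (t : ℤ) * b = ((La : ℤ) - xca - xba) * a + ((Lc : ℤ) - xac - xbc) * c := by
    rw [htZ]; ring_nf; linarith [e1, e2, e3]
  have ht0 : t = 0 := by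
    by_contra h
    have htpos : 0 < t := Nat.pos_of_ne_zero h
    have htbpos : (0 : ℤ) < (t : ℤ) * b :=
      mul_pos (by exact_mod_cast htpos) (by exact_mod_cast hb)
    rcases le_or_gt 0 ((La : ℤ) - xca - xba) with hu0 | hu0
    · rcases le_or_gt 0 ((Lc : ℤ) - xac - xbc) with hv0 | hv0
      · obtain ⟨u', hu'⟩ : ∃ u' : ℕ, (u' : ℤ) = (La : ℤ) - xca - xba := ⟨La - xca - xba, by omega⟩
        obtain ⟨v', hv'⟩ : ∃ v' : ℕ, (v' : ℤ) = (Lc : ℤ) - xac - xbc := ⟨Lc - xac - xbc, by omega⟩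
        have hN : t * b = u' * a + v' * c := by
          have : (t : ℤ) * b = (u' : ℤ) * a + (v' : ℤ) * c := by rw [hu', hv']; linarith
          exact_mod_cast this
        have := minB t htpos ⟨u', v', hN⟩
        omega
      · -- V < 0, U ≥ 0 : U*a = t*b + (-V)*c > 0
        have hVc : (0 : ℤ) ≤ (-((Lc : ℤ) - xac - xbc)) * c :=
          mul_nonneg (by omega) (by positivity)
        have hUpos : (0 : ℤ) < (La : ℤ) - xca - xba := by
          rcases eq_or_lt_of_le hu0 with h' | h'
          · exfalso
            have : ((La : ℤ) - xca - xba) * a = 0 := by rw [← h']; ring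
            linarith [hZ, hVc, htbpos, this]
          · exact h'
        obtain ⟨u', hu'⟩ : ∃ u' : ℕ, (u' : ℤ) = (La : ℤ) - xca - xba := ⟨La - xca - xba, by omega⟩
        obtain ⟨w', hw'⟩ : ∃ w' : ℕ, (w' : ℤ) = -((Lc : ℤ) - xac - xbc) := ⟨xac + xbc - Lc, by omega⟩
        have hN : u' * a = t * b + w' * c := by
          have : (u' : ℤ) * a = (t : ℤ) * b + (w' : ℤ) * c := by rw [hu', hw']; linarith
          exact_mod_cast this
        have hle := minA u' (by omega) ⟨t, w', hN⟩
        omega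
    · -- U < 0 : V*c = t*b + (-U)*a > 0
      have hUc : (0 : ℤ) ≤ (-((La : ℤ) - xca - xba)) * a := mul_nonneg (by omega) (by positivity)
      have hVpos : (0 : ℤ) < (Lc : ℤ) - xac - xbc := by
        by_contra h'
        push_neg at h'
        have : ((Lc : ℤ) - xac - xbc) * c ≤ 0 :=
          mul_nonpos_of_nonpos_of_nonneg h' (by positivity)
        linarith [hZ, hUc, htbpos, this]
      obtain ⟨v', hv'⟩ : ∃ v' : ℕ, (v' : ℤ) = (Lc : ℤ) - xac - xbc := ⟨Lc - xac - xbc, by omega⟩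
      obtain ⟨w', hw'⟩ : ∃ w' : ℕ, (w' : ℤ) = -((La : ℤ) - xca - xba) := ⟨xca + xba - La, by omega⟩
      have hN : v' * c = w' * a + t * b := by
        have : (v' : ℤ) * c = (w' : ℤ) * a + (t : ℤ) * b := by rw [hv', hw']; linarith
        exact_mod_cast this
      have hle := minC v' (by omega) ⟨w', t, hN⟩
      omega
  -- now U*a + V*c = 0
  have huv : ((La : ℤ) - xca - xba) * a + ((Lc : ℤ) - xac - xbc) * c = 0 := by
    rw [ht0] at hZ
    push_cast at hZ
    linarith
  have hU0 : (La : ℤ) - xca - xba = 0 := by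
    rcases lt_trichotomy ((La : ℤ) - xca - xba) 0 with h' | h' | h'
    · exfalso
      have hVpos : (0 : ℤ) < (Lc : ℤ) - xac - xbc := by
        by_contra hx
        push_neg at hx
        have k1 : ((La : ℤ) - xca - xba) * a < 0 :=
          mul_neg_of_neg_of_pos h' (by exact_mod_cast ha)
        have k2 : ((Lc : ℤ) - xac - xbc) * c ≤ 0 :=
          mul_nonpos_of_nonpos_of_nonneg hx (by positivity)
        linarith
      obtain ⟨v', hv'⟩ : ∃ v' : ℕ, (v' : ℤ) = (Lc : ℤ) - xac - xbc := ⟨Lc - xac - xbc, by omega⟩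
      obtain ⟨w', hw'⟩ : ∃ w' : ℕ, (w' : ℤ) = -((La : ℤ) - xca - xba) := ⟨xca + xba - La, by omega⟩
      have hN : v' * c = w' * a + 0 * b := by
        have : (v' : ℤ) * c = (w' : ℤ) * a + (0 : ℤ) * b := by rw [hv', hw']; linarith
        exact_mod_cast this
      have hle := minC v' (by omega) ⟨w', 0, hN⟩
      omega
    · exact h'
    · exfalso
      have hVneg : (Lc : ℤ) - xac - xbc < 0 := by
        by_contra hx
        push_neg at hx
        have k1 : (0 : ℤ) < ((La : ℤ) - xca - xba) * a :=
          mul_pos h' (by exact_mod_cast ha)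
        have k2 : (0 : ℤ) ≤ ((Lc : ℤ) - xac - xbc) * c := mul_nonneg hx (by positivity)
        linarith
      obtain ⟨u', hu'⟩ : ∃ u' : ℕ, (u' : ℤ) = (La : ℤ) - xca - xba := ⟨La - xca - xba, by omega⟩
      obtain ⟨w', hw'⟩ : ∃ w' : ℕ, (w' : ℤ) = -((Lc : ℤ) - xac - xbc) := ⟨xac + xbc - Lc, by omega⟩
      have hN : u' * a = 0 * b + w' * c := by
        have : (u' : ℤ) * a = (0 : ℤ) * b + (w' : ℤ) * c := by rw [hu', hw']; linarith
        exact_mod_cast this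
      have hle := minA u' (by omega) ⟨0, w', hN⟩
      omega
  have hV0 : (Lc : ℤ) - xac - xbc = 0 := by
    rw [hU0] at huv
    simp at huv
    rcases huv with h' | h'
    · linarith
    · exfalso; omega
  refine ⟨by omega, by omega, by omega⟩


set_option maxHeartbeats 1000000 in
lemma reduce (a b c La Lb Lc xab xac xba xbc xca xcb : ℕ)
    (ha : 0 < a) (hb : 0 < b) (hc : 0 < c)
    (hLa : 0 < La) (hxab : 0 < xab) (hxac : 0 < xac) (hxba : 0 < xba) (hxca : 0 < xca)
    (hxabLb : xab ≤ Lb) (hxacLc : xac ≤ Lc)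
    (h1 : La * a = xab * b + xac * c) (h2 : Lb * b = xba * a + xbc * c)
    (h3 : Lc * c = xca * a + xcb * b) :
    ∀ q r : ℕ, ∃ p q' r' : ℕ, q * b + r * c = p * a + q' * b + r' * c ∧
      ((q' < Lb ∧ r' < xac) ∨ (q' < xab ∧ r' < Lc)) := by
  suffices H : ∀ N q r, q * b + r * c ≤ N → ∃ p q' r' : ℕ,
      q * b + r * c = p * a + q' * b + r' * c ∧
      ((q' < Lb ∧ r' < xac) ∨ (q' < xab ∧ r' < Lc)) from fun q r => H _ q r le_rfl
  intro N
  induction N with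
  | zero =>
    intro q r h
    have h0 : q * b + r * c = 0 := Nat.le_zero.mp h
    have hq0 : q * b = 0 := by omega
    have hr0 : r * c = 0 := by omega
    have hq : q = 0 := by rcases Nat.mul_eq_zero.mp hq0 with h' | h' <;> omega
    have hr : r = 0 := by rcases Nat.mul_eq_zero.mp hr0 with h' | h' <;> omega
    exact ⟨0, q, r, by ring, Or.inl ⟨by omega, by omega⟩⟩
  | succ N ih =>
    intro q r hle
    by_cases hsh : (q < Lb ∧ r < xac) ∨ (q < xab ∧ r < Lc)
    · exact ⟨0, q, r, by ring, hsh⟩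
    · have hcases : Lc ≤ r ∨ Lb ≤ q ∨ (xab ≤ q ∧ xac ≤ r) := by omega
      rcases hcases with hr | hq | ⟨hq, hr⟩
      · obtain ⟨r₂, rfl⟩ : ∃ r₂, r = Lc + r₂ := ⟨r - Lc, by omega⟩
        have hkey : q * b + (Lc + r₂) * c = xca * a + ((q + xcb) * b + r₂ * c) := by
          have h' : q * b + (Lc + r₂) * c = q * b + (xca * a + xcb * b) + r₂ * c := by
            rw [← h3]; ring
          linarith
        have hpos : 0 < xca * a := Nat.mul_pos hxca ha
        have hlt : (q + xcb) * b + r₂ * c ≤ N := by linarith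
        obtain ⟨p, q', r', heq, hsh'⟩ := ih (q + xcb) r₂ hlt
        refine ⟨xca + p, q', r', ?_, hsh'⟩
        calc q * b + (Lc + r₂) * c = xca * a + ((q + xcb) * b + r₂ * c) := hkey
          _ = xca * a + (p * a + q' * b + r' * c) := by rw [heq]
          _ = (xca + p) * a + q' * b + r' * c := by ring
      · obtain ⟨q₂, rfl⟩ : ∃ q₂, q = Lb + q₂ := ⟨q - Lb, by omega⟩
        have hkey : (Lb + q₂) * b + r * c = xba * a + (q₂ * b + (r + xbc) * c) := by
          have h' : (Lb + q₂) * b + r * c = (xba * a + xbc * c) + q₂ * b + r * c := by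
            rw [← h2]; ring
          linarith
        have hpos : 0 < xba * a := Nat.mul_pos hxba ha
        have hlt : q₂ * b + (r + xbc) * c ≤ N := by linarith
        obtain ⟨p, q', r', heq, hsh'⟩ := ih q₂ (r + xbc) hlt
        refine ⟨xba + p, q', r', ?_, hsh'⟩
        calc (Lb + q₂) * b + r * c = xba * a + (q₂ * b + (r + xbc) * c) := hkey
          _ = xba * a + (p * a + q' * b + r' * c) := by rw [heq]
          _ = (xba + p) * a + q' * b + r' * c := by ring
      · obtain ⟨q₂, rfl⟩ : ∃ q₂, q = xab + q₂ := ⟨q - xab, by omega⟩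
        obtain ⟨r₂, rfl⟩ : ∃ r₂, r = xac + r₂ := ⟨r - xac, by omega⟩
        have hkey : (xab + q₂) * b + (xac + r₂) * c = La * a + (q₂ * b + r₂ * c) := by
          have h' : (xab + q₂) * b + (xac + r₂) * c = (xab * b + xac * c) + q₂ * b + r₂ * c := by
            ring
          rw [← h1] at h'
          linarith
        have hpos : 0 < La * a := Nat.mul_pos hLa ha
        have hlt : q₂ * b + r₂ * c ≤ N := by linarith
        obtain ⟨p, q', r', heq, hsh'⟩ := ih q₂ r₂ hlt
        refine ⟨La + p, q', r', ?_, hsh'⟩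
        calc (xab + q₂) * b + (xac + r₂) * c = La * a + (q₂ * b + r₂ * c) := hkey
          _ = La * a + (p * a + q' * b + r' * c) := by rw [heq]
          _ = (La + p) * a + q' * b + r' * c := by ring

set_option maxHeartbeats 1000000 in
lemma injAux (a b c La Lb Lc xab xac : ℕ) (ha : 0 < a) (hb : 0 < b) (hc : 0 < c)
    (hxab : 0 < xab) (hxac : 0 < xac)
    (hxabLb : xab < Lb) (hxacLc : xac < Lc)
    (minA : ∀ m, 0 < m → m * a ∈ numSg b c → La ≤ m)
    (minB : ∀ m, 0 < m → m * b ∈ numSg a c → Lb ≤ m)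
    (minC : ∀ m, 0 < m → m * c ∈ numSg a b → Lc ≤ m)
    (h1 : La * a = xab * b + xac * c)
    (q r q' r' : ℕ)
    (hq : (q < Lb ∧ r < xac) ∨ (q < xab ∧ r < Lc))
    (hq' : (q' < Lb ∧ r' < xac) ∨ (q' < xab ∧ r' < Lc))
    (hqq : q' ≤ q)
    (hcong : (a : ℤ) ∣ ((q : ℤ) * b + r * c) - ((q' : ℤ) * b + r' * c)) :
    q = q' ∧ r = r' := by
  have e1 : ((La : ℤ)) * a = (xab : ℤ) * b + (xac : ℤ) * c := by exact_mod_cast h1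
  have hqLb : q < Lb := by omega
  have hr'Lc : r' < Lc := by omega
  set d : ℕ := q - q' with hddef
  clear_value d
  have hdq : (d : ℤ) = (q : ℤ) - q' := by omega
  rcases le_or_gt r' r with he | he
  · -- e ≥ 0
    set e : ℕ := r - r' with hedef
    clear_value e
    have her : (e : ℤ) = (r : ℤ) - r' := by omega
    have hcast : ((d * b + e * c : ℕ) : ℤ) = ((q : ℤ) * b + r * c) - ((q' : ℤ) * b + r' * c) := by
      push_cast
      linear_combination (b : ℤ) * hdq + (c : ℤ) * her
    have hdvdN : a ∣ d * b + e * c := by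
      have := hcast ▸ hcong
      exact_mod_cast this
    obtain ⟨m, hm⟩ := hdvdN
    rcases Nat.eq_zero_or_pos m with hm0 | hm0
    · rw [hm0, mul_zero] at hm
      have hd0 : d * b = 0 := by omega
      have he0 : e * c = 0 := by omega
      have : d = 0 := by rcases Nat.mul_eq_zero.mp hd0 with h' | h' <;> omega
      have : e = 0 := by rcases Nat.mul_eq_zero.mp he0 with h' | h' <;> omega
      constructor <;> omega
    · have hmin : La ≤ m := minA m hm0 ⟨d, e, by rw [mul_comm]; exact hm.symm⟩
      have hbig : xab * b + xac * c ≤ d * b + e * c := by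
        have := Nat.mul_le_mul_right a hmin
        rw [h1] at this
        have hm' : m * a = d * b + e * c := by rw [mul_comm]; exact hm.symm
        linarith
      rcases le_or_gt xac e with hec | hec
      · -- e ≥ xac forces branch 2 for (q,r)
        have hrx : xac ≤ r := by omega
        have hqxab : q < xab := by rcases hq with ⟨_, h'⟩ | ⟨h', _⟩ <;> omega
        have hrLc : r < Lc := by rcases hq with ⟨_, h'⟩ | ⟨_, h'⟩ <;> omega
        have heLc : e < Lc := by omega
        have hdxab : d < xab := by omega
        have heq2 : (e - xac) * c = (m - La) * a + (xab - d) * b := by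
          have hz : ((e - xac : ℕ) : ℤ) * c = ((m - La : ℕ) : ℤ) * a + ((xab - d : ℕ) : ℤ) * b := by
            push_cast [Nat.cast_sub hec, Nat.cast_sub hmin, Nat.cast_sub hdxab.le]
            have hmz : ((d * b + e * c : ℕ) : ℤ) = (a : ℤ) * m := by exact_mod_cast hm
            push_cast at hmz
            linarith
          exact_mod_cast hz
        have hpos : 0 < e - xac := by
          rcases Nat.eq_zero_or_pos (e - xac) with h0 | h0
          · exfalso
            rw [h0, zero_mul] at heq2
            have h' : (xab - d) * b = 0 := by omega
            rcases Nat.mul_eq_zero.mp h' with h'' | h'' <;> omega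
          · exact h0
        have := minC (e - xac) hpos ⟨m - La, xab - d, heq2⟩
        omega
      · rcases le_or_gt xab d with hdc | hdc
        · have heq3 : (d - xab) * b = (m - La) * a + (xac - e) * c := by
            have hz : ((d - xab : ℕ) : ℤ) * b = ((m - La : ℕ) : ℤ) * a + ((xac - e : ℕ) : ℤ) * c := by
              push_cast [Nat.cast_sub hdc, Nat.cast_sub hmin, Nat.cast_sub hec.le]
              have hmz : ((d * b + e * c : ℕ) : ℤ) = (a : ℤ) * m := by exact_mod_cast hm
              push_cast at hmz
              linarith
            exact_mod_cast hz
          have hpos : 0 < d - xab := by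
            rcases Nat.eq_zero_or_pos (d - xab) with h0 | h0
            · exfalso
              rw [h0, zero_mul] at heq3
              have h' : (xac - e) * c = 0 := by omega
              rcases Nat.mul_eq_zero.mp h' with h'' | h'' <;> omega
            · exact h0
          have := minB (d - xab) hpos ⟨m - La, xac - e, heq3⟩
          omega
        · exfalso
          have k1 : (d + 1) * b ≤ xab * b := Nat.mul_le_mul_right b (by omega)
          have k2 : (e + 1) * c ≤ xac * c := Nat.mul_le_mul_right c (by omega)
          have exp1 : (d + 1) * b = d * b + b := by ring
          have exp2 : (e + 1) * c = e * c + c := by ring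
          omega
  · -- r < r'
    exfalso
    set f : ℕ := r' - r with hfdef
    clear_value f
    have hf : (f : ℤ) = (r' : ℤ) - r := by omega
    have hfpos : 0 < f := by omega
    have hdvd' : (a : ℤ) ∣ (d : ℤ) * b - (f : ℤ) * c := by
      have : (d : ℤ) * b - (f : ℤ) * c = ((q : ℤ) * b + r * c) - ((q' : ℤ) * b + r' * c) := by
        linear_combination (b : ℤ) * hdq - (c : ℤ) * hf
      rw [this]; exact hcong
    obtain ⟨k, hk⟩ := hdvd'
    rcases le_or_gt ((f : ℤ) * c) ((d : ℤ) * b) with hD | hD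
    · have hk0 : 0 ≤ k := by
        by_contra h'
        push_neg at h'
        have : (a : ℤ) * k < 0 :=
          mul_neg_of_pos_of_neg (by exact_mod_cast ha) h'
        linarith
      obtain ⟨k', hk'⟩ : ∃ k' : ℕ, (k' : ℤ) = k := ⟨k.toNat, Int.toNat_of_nonneg hk0⟩
      rw [← hk'] at hk
      have hN : d * b = k' * a + f * c := by
        have : (d : ℤ) * b = (k' : ℤ) * a + (f : ℤ) * c := by linarith
        exact_mod_cast this
      have hdpos : 0 < d := by
        rcases Nat.eq_zero_or_pos d with h0 | h0
        · exfalso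
          rw [h0, zero_mul] at hN
          have h' : f * c = 0 := by omega
          rcases Nat.mul_eq_zero.mp h' with h'' | h'' <;> omega
        · exact h0
      have := minB d hdpos ⟨k', f, hN⟩
      omega
    · have hkneg : k < 0 := by
        by_contra h'
        push_neg at h'
        have : 0 ≤ (a : ℤ) * k := mul_nonneg (by positivity) h'
        linarith
      obtain ⟨k', hk'⟩ : ∃ k' : ℕ, (k' : ℤ) = -k := ⟨(-k).toNat, Int.toNat_of_nonneg (by omega)⟩
      have hN : f * c = k' * a + d * b := by
        have : (f : ℤ) * c = (k' : ℤ) * a + (d : ℤ) * b := by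
          rw [hk']
          linarith
        exact_mod_cast this
      have := minC f hfpos ⟨k', d, hN⟩
      omega

lemma inj (a b c La Lb Lc xab xac : ℕ) (ha : 0 < a) (hb : 0 < b) (hc : 0 < c)
    (hxab : 0 < xab) (hxac : 0 < xac)
    (hxabLb : xab < Lb) (hxacLc : xac < Lc)
    (minA : ∀ m, 0 < m → m * a ∈ numSg b c → La ≤ m)
    (minB : ∀ m, 0 < m → m * b ∈ numSg a c → Lb ≤ m)
    (minC : ∀ m, 0 < m → m * c ∈ numSg a b → Lc ≤ m)
    (h1 : La * a = xab * b + xac * c)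
    (q r q' r' : ℕ)
    (hq : (q < Lb ∧ r < xac) ∨ (q < xab ∧ r < Lc))
    (hq' : (q' < Lb ∧ r' < xac) ∨ (q' < xab ∧ r' < Lc))
    (hcong : (a : ℤ) ∣ ((q : ℤ) * b + r * c) - ((q' : ℤ) * b + r' * c)) :
    q = q' ∧ r = r' := by
  rcases le_total q' q with h | h
  · exact injAux a b c La Lb Lc xab xac ha hb hc hxab hxac hxabLb hxacLc
      minA minB minC h1 q r q' r' hq hq' h hcong
  · have hcong' : (a : ℤ) ∣ ((q' : ℤ) * b + r' * c) - ((q : ℤ) * b + r * c) := by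
      have := hcong.neg_right
      simpa using this
    obtain ⟨h1', h2'⟩ := injAux a b c La Lb Lc xab xac ha hb hc hxab hxac hxabLb hxacLc
      minA minB minC h1 q' r' q r hq' hq h hcong'
    exact ⟨h1'.symm, h2'.symm⟩
set_option maxHeartbeats 4000000 in
lemma core (a b c : ℕ) (ha : 1 < a) (hb : 1 < b) (hc : 1 < c)
    (hab : Nat.Coprime a b) (hac : Nat.Coprime a c) (hbc : Nat.Coprime b c)
    (hLa : 1 < Lval a b c) (hLb : 1 < Lval b a c) (hLc : 1 < Lval c a b)
    (xab xac xba xbc xca xcb : ℕ)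
    (h1 : Lval a b c * a = xab * b + xac * c)
    (h2 : Lval b a c * b = xba * a + xbc * c)
    (h3 : Lval c a b * c = xca * a + xcb * b)
    (g : ℕ) (hg : IsGreatest {n : ℕ | n ∉ numSg3 a b c} g) :
    (g : ℤ) = Lval a b c * a + (max (xbc * c) (xcb * b) : ℕ) - a - b - c := by
  have minGen : ∀ x y z : ℕ, ∀ m, 0 < m → m * x ∈ numSg y z → Lval x y z ≤ m :=
    fun _ _ _ _ hm hmem => Lval_le hm hmem
  -- rewritten forms of the hypotheses
  have h1' : Lval a c b * a = xac * c + xab * b := by rw [← Lval_comm]; omega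
  have h2' : Lval b c a * b = xbc * c + xba * a := by rw [← Lval_comm]; omega
  have h3' : Lval c b a * c = xcb * b + xca * a := by rw [← Lval_comm]; omega
  have hLa' : 1 < Lval a c b := by rw [← Lval_comm]; omega
  have hLb' : 1 < Lval b c a := by rw [← Lval_comm]; omega
  have hLc' : 1 < Lval c b a := by rw [← Lval_comm]; omega
  -- positivity
  have hxab : 0 < xab :=
    xpos a b c _ _ xab xac hc hac hbc (minGen a b c) (minGen b a c) (by omega) hLb h1
  have hxac : 0 < xac :=
    xpos a c b _ _ xac xab hb hab hbc.symm (minGen a c b) (minGen c a b) (by omega) hLc h1'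
  have hxba : 0 < xba :=
    xpos b a c _ _ xba xbc hc hbc hac (minGen b a c) (minGen a b c) (by omega) hLa h2
  have hxbc : 0 < xbc :=
    xpos b c a _ _ xbc xba ha hab.symm hac.symm (minGen b c a) (minGen c b a) (by omega) hLc' h2'
  have hxca : 0 < xca :=
    xpos c a b _ _ xca xcb hb hbc.symm hab (minGen c a b) (minGen a c b) (by omega) hLa' h3
  have hxcb : 0 < xcb :=
    xpos c b a _ _ xcb xca ha hac.symm hab.symm (minGen c b a) (minGen b c a) (by omega) hLb' h3'
  -- cross bounds
  obtain ⟨bACac, bACca⟩ := cross a b c _ _ xab xac xca xcb (by omega) hxab hxac hxca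
    (minGen a b c) (minGen c a b) h1 h3
  obtain ⟨bABab, bABba⟩ := cross a c b _ _ xac xab xba xbc (by omega) hxac hxab hxba
    (minGen a c b) (minGen b a c) h1' h2
  obtain ⟨bBCbc, bBCcb⟩ := cross b a c _ _ xba xbc xcb xca (by omega) hxba hxbc hxcb
    (minGen b a c) (minGen c b a) h2 h3'
  have bABba' : xba < Lval a b c := by rw [Lval_comm]; exact bABba
  have bBCbc' : xbc < Lval c a b := by rw [Lval_comm]; exact bBCbc
  -- relations
  obtain ⟨hrelA, hrelB, hrelC⟩ := rel a b c _ _ _ xab xac xba xbc xca xcb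
    (by omega) (by omega) (by omega) hxab hxac hxba hxbc hxca hxcb
    bACca bACac bABab bBCcb (minGen a b c) (minGen b a c) (minGen c a b) h1 h2 h3
  -- the reduction map
  have hred := reduce a b c _ _ _ xab xac xba xbc xca xcb
    (by omega) (by omega) (by omega) (by omega) hxab hxac hxba hxca
    (le_of_lt bABab) (le_of_lt bACac) h1 h2 h3
  -- the corner element
  set W : ℕ := max ((Lval b a c - 1) * b + (xac - 1) * c)
      ((xab - 1) * b + (Lval c a b - 1) * c) with hWdef
  -- every integer above W - a is in the semigroup
  have hbig : ∀ n : ℕ, (W : ℤ) - a < n → n ∈ numSg3 a b c := by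
    intro n hn
    haveI : NeZero a := ⟨by omega⟩
    have hbU : IsUnit ((b : ZMod a)) := (ZMod.isUnit_iff_coprime b a).2 hab.symm
    set q₁ : ℕ := ((n : ZMod a) * (b : ZMod a)⁻¹).val with hq₁
    have hkey : ((q₁ * b : ℕ) : ZMod a) = (n : ZMod a) := by
      push_cast
      rw [hq₁, ZMod.natCast_val, ZMod.cast_id, mul_assoc, ZMod.inv_mul_of_unit _ hbU, mul_one]
    have hmod : q₁ * b ≡ n [MOD a] := (ZMod.natCast_eq_natCast_iff _ _ _).1 hkey
    have hdvd1 : (a : ℤ) ∣ (n : ℤ) - ((q₁ * b : ℕ) : ℤ) := hmod.dvd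
    obtain ⟨p, q₀, r₀, heq, hsh⟩ := hred q₁ 0
    have heq' : q₁ * b = p * a + q₀ * b + r₀ * c := by linarith [heq]
    have hdvd2 : (a : ℤ) ∣ (n : ℤ) - ((q₀ * b + r₀ * c : ℕ) : ℤ) := by
      have hx : (n : ℤ) - ((q₀ * b + r₀ * c : ℕ) : ℤ)
          = ((n : ℤ) - ((q₁ * b : ℕ) : ℤ)) + a * p := by
        have : ((q₁ * b : ℕ) : ℤ) = ((p * a + q₀ * b + r₀ * c : ℕ) : ℤ) := by exact_mod_cast heq'
        push_cast at this ⊢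
        linarith
      rw [hx]
      exact dvd_add hdvd1 ⟨p, rfl⟩
    have hwW : q₀ * b + r₀ * c ≤ W := by
      rcases hsh with ⟨hq', hr'⟩ | ⟨hq', hr'⟩
      · calc q₀ * b + r₀ * c ≤ (Lval b a c - 1) * b + (xac - 1) * c :=
              Nat.add_le_add (Nat.mul_le_mul_right _ (by omega)) (Nat.mul_le_mul_right _ (by omega))
          _ ≤ W := le_max_left _ _
      · calc q₀ * b + r₀ * c ≤ (xab - 1) * b + (Lval c a b - 1) * c :=
              Nat.add_le_add (Nat.mul_le_mul_right _ (by omega)) (Nat.mul_le_mul_right _ (by omega))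
          _ ≤ W := le_max_right _ _
    obtain ⟨k, hk⟩ := hdvd2
    have hk0 : 0 ≤ k := by
      by_contra hneg
      push_neg at hneg
      have h1' : (a : ℤ) * k ≤ (a : ℤ) * (-1) :=
        mul_le_mul_of_nonneg_left (by omega) (by positivity)
      have hcW : ((q₀ * b + r₀ * c : ℕ) : ℤ) ≤ (W : ℤ) := by exact_mod_cast hwW
      have : (a : ℤ) * (-1) = -a := by ring
      linarith
    obtain ⟨k', hk'⟩ : ∃ k' : ℕ, (k' : ℤ) = k := ⟨k.toNat, Int.toNat_of_nonneg hk0⟩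
    refine ⟨k', q₀, r₀, ?_⟩
    have hfin : (n : ℤ) = (k' : ℤ) * a + q₀ * b + r₀ * c := by
      rw [hk']
      push_cast at hk ⊢
      linarith
    exact_mod_cast hfin
  -- 1 is not in the semigroup
  have hone : (1 : ℕ) ∉ numSg3 a b c := by
    rintro ⟨p, q, r, hpr⟩
    have c1 : p * a = 0 ∨ 2 ≤ p * a := by
      rcases Nat.eq_zero_or_pos p with h | h
      · left; rw [h, zero_mul]
      · right; calc 2 ≤ a := ha
          _ ≤ p * a := Nat.le_mul_of_pos_left a h
    have c2 : q * b = 0 ∨ 2 ≤ q * b := by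
      rcases Nat.eq_zero_or_pos q with h | h
      · left; rw [h, zero_mul]
      · right; calc 2 ≤ b := hb
          _ ≤ q * b := Nat.le_mul_of_pos_left b h
    have c3 : r * c = 0 ∨ 2 ≤ r * c := by
      rcases Nat.eq_zero_or_pos r with h | h
      · left; rw [h, zero_mul]
      · right; calc 2 ≤ c := hc
          _ ≤ r * c := Nat.le_mul_of_pos_left c h
    omega
  -- W is at least a+1
  have hWa : a + 1 ≤ W := by
    by_contra hcon
    push_neg at hcon
    refine hone (hbig 1 ?_)
    have : (W : ℤ) ≤ (a : ℤ) := by exact_mod_cast (by omega : W ≤ a)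
    push_cast
    linarith
  -- W - a is not in the semigroup
  have hWnm : (W - a) ∉ numSg3 a b c := by
    rintro ⟨p, q, r, hrep⟩
    obtain ⟨p', q₀, r₀, heq, hsh⟩ := hred q r
    have hWrep : W = (p + p' + 1) * a + (q₀ * b + r₀ * c) := by
      have hstep : W = p * a + (q * b + r * c) + a := by omega
      rw [show q * b + r * c = p' * a + q₀ * b + r₀ * c from heq] at hstep
      have hexp : (p + p' + 1) * a = p * a + p' * a + a := by ring
      linarith
    have hfinish : ∀ qc rc : ℕ,
        W = qc * b + rc * c →
        ((qc < Lval b a c ∧ rc < xac) ∨ (qc < xab ∧ rc < Lval c a b)) → False := by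
      intro qc rc hWc hshc
      have hZZ : ((qc : ℤ) * b + rc * c) - ((q₀ : ℤ) * b + r₀ * c)
          = (a : ℤ) * ((p + p' + 1 : ℕ) : ℤ) := by
        have hW1 : (W : ℤ) = (qc : ℤ) * b + rc * c := by exact_mod_cast hWc
        have hW2 : (W : ℤ) = ((p + p' + 1 : ℕ) : ℤ) * a + ((q₀ * b + r₀ * c : ℕ) : ℤ) := by
          exact_mod_cast hWrep
        push_cast at hW2
        push_cast
        linarith
      obtain ⟨heq1, heq2⟩ := inj a b c _ _ _ xab xac (by omega) (by omega) (by omega)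
        hxab hxac bABab bACac (minGen a b c) (minGen b a c) (minGen c a b) h1
        qc rc q₀ r₀ hshc hsh ⟨_, hZZ⟩
      rw [← heq1, ← heq2] at hWrep
      have hge : a ≤ (p + p' + 1) * a := Nat.le_mul_of_pos_left a (by omega)
      omega
    rcases max_cases ((Lval b a c - 1) * b + (xac - 1) * c)
        ((xab - 1) * b + (Lval c a b - 1) * c) with ⟨hWeq, _⟩ | ⟨hWeq, _⟩
    · exact hfinish (Lval b a c - 1) (xac - 1) (by rw [hWdef, hWeq])
        (Or.inl ⟨by omega, by omega⟩)
    · exact hfinish (xab - 1) (Lval c a b - 1) (by rw [hWdef, hWeq])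
        (Or.inr ⟨by omega, by omega⟩)
  -- characterize g
  have hle1 : (g : ℤ) ≤ (W : ℤ) - a := by
    by_contra hcon
    push_neg at hcon
    exact hg.1 (hbig g hcon)
  have hle2 : W - a ≤ g := hg.2 hWnm
  have hgeq : (g : ℤ) = (W : ℤ) - a := by omega
  rw [hgeq]
  -- final algebra
  have e1 : ((Lval a b c : ℤ)) * a = (xab : ℤ) * b + (xac : ℤ) * c := by exact_mod_cast h1
  have hrBb : ((Lval b a c : ℤ)) * b = (xab : ℤ) * b + (xcb : ℤ) * b := by
    have : ((Lval b a c : ℤ)) = (xab : ℤ) + xcb := by exact_mod_cast hrelB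
    rw [this]; ring
  have hrCc : ((Lval c a b : ℤ)) * c = (xac : ℤ) * c + (xbc : ℤ) * c := by
    have : ((Lval c a b : ℤ)) = (xac : ℤ) + xbc := by exact_mod_cast hrelC
    rw [this]; ring
  have hC1 : (((Lval b a c - 1) * b + (xac - 1) * c : ℕ) : ℤ)
      = (Lval a b c : ℤ) * a + (xcb : ℤ) * b - b - c := by
    push_cast [Nat.cast_sub (show 1 ≤ Lval b a c by omega), Nat.cast_sub (show 1 ≤ xac by omega)]
    linarith
  have hC2 : (((xab - 1) * b + (Lval c a b - 1) * c : ℕ) : ℤ)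
      = (Lval a b c : ℤ) * a + (xbc : ℤ) * c - b - c := by
    push_cast [Nat.cast_sub (show 1 ≤ Lval c a b by omega), Nat.cast_sub (show 1 ≤ xab by omega)]
    linarith
  rcases le_total (xbc * c) (xcb * b) with hm | hm
  · have hmax1 : max (xbc * c) (xcb * b) = xcb * b := max_eq_right hm
    have hmz : (xbc : ℤ) * c ≤ (xcb : ℤ) * b := by exact_mod_cast hm
    have hWC : W = (Lval b a c - 1) * b + (xac - 1) * c := by
      rw [hWdef]
      apply max_eq_left
      have hz : (((xab - 1) * b + (Lval c a b - 1) * c : ℕ) : ℤ)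
          ≤ (((Lval b a c - 1) * b + (xac - 1) * c : ℕ) : ℤ) := by
        rw [hC1, hC2]; linarith
      exact_mod_cast hz
    rw [hmax1, hWC]
    rw [hC1]
    push_cast
    ring
  · have hmax1 : max (xbc * c) (xcb * b) = xbc * c := max_eq_left hm
    have hmz : (xcb : ℤ) * b ≤ (xbc : ℤ) * c := by exact_mod_cast hm
    have hWC : W = (xab - 1) * b + (Lval c a b - 1) * c := by
      rw [hWdef]
      apply max_eq_right
      have hz : (((Lval b a c - 1) * b + (xac - 1) * c : ℕ) : ℤ)
          ≤ (((xab - 1) * b + (Lval c a b - 1) * c : ℕ) : ℤ) := by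
        rw [hC1, hC2]; linarith
      exact_mod_cast hz
    rw [hmax1, hWC]
    rw [hC2]
    push_cast
    ring

/-- Johnson's formula: for pairwise coprime `a₁,a₂,a₃ > 1` with all `L_i > 1`
and `L_i·a_i = x_{ij}·a_j + x_{ik}·a_k`, for every `{i,j,k} = {1,2,3}`:
`g(a₁,a₂,a₃) = L_i·a_i + max{x_{jk}a_k, x_{kj}a_j} − a₁ − a₂ − a₃`. -/
theorem stmt7 (a₁ a₂ a₃ : ℕ) (ha₁ : 1 < a₁) (ha₂ : 1 < a₂) (ha₃ : 1 < a₃)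
    (h12 : Nat.Coprime a₁ a₂) (h13 : Nat.Coprime a₁ a₃) (h23 : Nat.Coprime a₂ a₃)
    (hL₁ : 1 < Lval a₁ a₂ a₃) (hL₂ : 1 < Lval a₂ a₁ a₃) (hL₃ : 1 < Lval a₃ a₁ a₂)
    (x₁₂ x₁₃ x₂₁ x₂₃ x₃₁ x₃₂ : ℕ)
    (hx₁ : Lval a₁ a₂ a₃ * a₁ = x₁₂ * a₂ + x₁₃ * a₃)
    (hx₂ : Lval a₂ a₁ a₃ * a₂ = x₂₁ * a₁ + x₂₃ * a₃)
    (hx₃ : Lval a₃ a₁ a₂ * a₃ = x₃₁ * a₁ + x₃₂ * a₂)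
    (g : ℕ) (hg : IsGreatest {n : ℕ | n ∉ numSg3 a₁ a₂ a₃} g) :
    (g : ℤ) = Lval a₁ a₂ a₃ * a₁ + (max (x₂₃ * a₃) (x₃₂ * a₂) : ℕ) - a₁ - a₂ - a₃ ∧
    (g : ℤ) = Lval a₂ a₁ a₃ * a₂ + (max (x₁₃ * a₃) (x₃₁ * a₁) : ℕ) - a₁ - a₂ - a₃ ∧
    (g : ℤ) = Lval a₃ a₁ a₂ * a₃ + (max (x₁₂ * a₂) (x₂₁ * a₁) : ℕ) - a₁ - a₂ - a₃ := by
  refine ⟨?_, ?_, ?_⟩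
  · exact core a₁ a₂ a₃ ha₁ ha₂ ha₃ h12 h13 h23 hL₁ hL₂ hL₃
      x₁₂ x₁₃ x₂₁ x₂₃ x₃₁ x₃₂ hx₁ hx₂ hx₃ g hg
  · have hg2 : IsGreatest {n : ℕ | n ∉ numSg3 a₂ a₁ a₃} g := by
      rw [numSg3_perm₁ a₂ a₁ a₃]; exact hg
    have hLc2 : 1 < Lval a₃ a₂ a₁ := by rw [← Lval_comm]; omega
    have h3' : Lval a₃ a₂ a₁ * a₃ = x₃₂ * a₂ + x₃₁ * a₁ := by rw [← Lval_comm]; omega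
    have h := core a₂ a₁ a₃ ha₂ ha₁ ha₃ h12.symm h23 h13 hL₂ hL₁ hLc2
      x₂₁ x₂₃ x₁₂ x₁₃ x₃₂ x₃₁ hx₂ hx₁ h3' g hg2
    rw [h]; ring
  · have hg3 : IsGreatest {n : ℕ | n ∉ numSg3 a₃ a₁ a₂} g := by
      rw [← numSg3_perm₂ a₁ a₂ a₃]; exact hg
    have hLb3 : 1 < Lval a₁ a₃ a₂ := by rw [← Lval_comm]; omega
    have hLc3 : 1 < Lval a₂ a₃ a₁ := by rw [← Lval_comm]; omega
    have h2' : Lval a₁ a₃ a₂ * a₁ = x₁₃ * a₃ + x₁₂ * a₂ := by rw [← Lval_comm]; omega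
    have h3' : Lval a₂ a₃ a₁ * a₂ = x₂₃ * a₃ + x₂₁ * a₁ := by rw [← Lval_comm]; omega
    have h := core a₃ a₁ a₂ ha₃ ha₁ ha₂ h13.symm h23.symm h12 hL₃ hLb3 hLc3
      x₃₁ x₃₂ x₁₃ x₁₂ x₂₃ x₂₁ hx₃ h2' h3' g hg3
    rw [h]; ring
end

section
/- Let a₁,a₂,a₃ be pairwise coprime positive integers with a₁ > a₂ > a₃ > 1. Then for every {j,k} = {2,3} (i.e. for (j,k) = (2,3) and (j,k) = (3,2)), one has L_j·a_j = [L_j·a_j·a₁⁻¹]_{a_k}·a₁ + [L_j·a_j·a_k⁻¹]_{a₁}·a_k. -/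
lemma key_lemma (a b c : ℕ) (hac : Nat.Coprime a c) (hba : b < a)
    (h1c : 1 < c) (h1a : 1 < a) (hb : 0 < b) :
    Lval b a c * b =
      ((Lval b a c * b * modInv a c) % c) * a +
      ((Lval b a c * b * modInv c a) % a) * c := by
  haveI : NeZero c := ⟨by omega⟩
  haveI : NeZero a := ⟨by omega⟩
  have hcS : c ∈ {x : ℕ | 0 < x ∧ x * b ∈ numSg a c} := ⟨by omega, ⟨0, b, by ring⟩⟩
  have hLmem : Lval b a c ∈ {x : ℕ | 0 < x ∧ x * b ∈ numSg a c} :=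
    Nat.sInf_mem ⟨c, hcS⟩
  have hLle : Lval b a c ≤ c := Nat.sInf_le hcS
  set L := Lval b a c with hL
  obtain ⟨hLpos, p, q, hpq⟩ := hLmem
  set p' := p % c with hp'
  set q' := q + (p / c) * a with hq'
  have hpdecomp : p = p' + c * (p / c) := (Nat.mod_add_div p c).symm
  have hrep : L * b = p' * a + q' * c := by
    rw [hpq, hq']
    nth_rewrite 1 [hpdecomp]
    ring
  have hp'lt : p' < c := Nat.mod_lt _ (by omega)
  have hq'lt : q' < a := by
    by_contra h
    push_neg at h
    have h1 : a * c ≤ q' * c := Nat.mul_le_mul_right c h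
    have h2 : L * b ≤ c * b := Nat.mul_le_mul_right b hLle
    have h4 : q' * c ≤ L * b := by rw [hrep]; omega
    nlinarith
  have hu : IsUnit ((a : ZMod c)) := by
    rw [ZMod.isUnit_iff_coprime]; exact hac
  have hu2 : IsUnit ((c : ZMod a)) := by
    rw [ZMod.isUnit_iff_coprime]; exact hac.symm
  have hmod1 : (L * b * modInv a c) % c = p' := by
    have hcast : ((L * b * modInv a c : ℕ) : ZMod c) = (p' : ZMod c) := by
      push_cast
      have hmi : ((modInv a c : ℕ) : ZMod c) = ((a : ZMod c))⁻¹ := by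
        simp [modInv, ZMod.natCast_val, ZMod.cast_id]
      have hLb : ((L : ZMod c)) * (b : ZMod c) = (p' : ZMod c) * (a : ZMod c) := by
        have : ((L * b : ℕ) : ZMod c) = ((p' * a + q' * c : ℕ) : ZMod c) := by
          rw [hrep]
        push_cast at this
        simpa [ZMod.natCast_self] using this
      rw [hmi, hLb, mul_assoc, ZMod.mul_inv_of_unit _ hu, mul_one]
    have := congrArg ZMod.val hcast
    rwa [ZMod.val_natCast, ZMod.val_natCast, Nat.mod_eq_of_lt hp'lt] at this
  have hmod2 : (L * b * modInv c a) % a = q' := by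
    have hcast : ((L * b * modInv c a : ℕ) : ZMod a) = (q' : ZMod a) := by
      push_cast
      have hmi : ((modInv c a : ℕ) : ZMod a) = ((c : ZMod a))⁻¹ := by
        simp [modInv, ZMod.natCast_val, ZMod.cast_id]
      have hLb : ((L : ZMod a)) * (b : ZMod a) = (q' : ZMod a) * (c : ZMod a) := by
        have : ((L * b : ℕ) : ZMod a) = ((p' * a + q' * c : ℕ) : ZMod a) := by
          rw [hrep]
        push_cast at this
        simpa [ZMod.natCast_self] using this
      rw [hmi, hLb, mul_assoc, ZMod.mul_inv_of_unit _ hu2, mul_one]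
    have := congrArg ZMod.val hcast
    rwa [ZMod.val_natCast, ZMod.val_natCast, Nat.mod_eq_of_lt hq'lt] at this
  rw [hmod1, hmod2]
  exact hrep

/-- Proposition 6: for pairwise coprime `a₁ > a₂ > a₃ > 1` and each
`{j,k} = {2,3}`: `L_j·a_j = [L_j·a_j·a₁⁻¹]_{a_k}·a₁ + [L_j·a_j·a_k⁻¹]_{a₁}·a_k`. -/
theorem stmt8 (a₁ a₂ a₃ : ℕ)
    (h12 : Nat.Coprime a₁ a₂) (h13 : Nat.Coprime a₁ a₃) (h23 : Nat.Coprime a₂ a₃)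
    (hgt : a₁ > a₂ ∧ a₂ > a₃ ∧ a₃ > 1) :
    Lval a₂ a₁ a₃ * a₂ =
        ((Lval a₂ a₁ a₃ * a₂ * modInv a₁ a₃) % a₃) * a₁ +
        ((Lval a₂ a₁ a₃ * a₂ * modInv a₃ a₁) % a₁) * a₃ ∧
    Lval a₃ a₁ a₂ * a₃ =
        ((Lval a₃ a₁ a₂ * a₃ * modInv a₁ a₂) % a₂) * a₁ +
        ((Lval a₃ a₁ a₂ * a₃ * modInv a₂ a₁) % a₁) * a₂ := by
  obtain ⟨h1, h2, h3⟩ := hgt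
  exact ⟨key_lemma a₁ a₂ a₃ h13 (by omega) (by omega) (by omega) (by omega),
         key_lemma a₁ a₃ a₂ h12 (by omega) (by omega) (by omega) (by omega)⟩
end

section
/- Let a₁,a₂,a₃ be pairwise coprime positive integers with a₁ > a₂ > a₃ > 1. If a₁ is a fundamental gap of the numerical semigroup ⟨a₂,a₃⟩ (i.e. a₁ ∉ ⟨a₂,a₃⟩ while 2a₁ ∈ ⟨a₂,a₃⟩ and 3a₁ ∈ ⟨a₂,a₃⟩), then g(a₁,a₂,a₃) = max{ [a₁·a₂⁻¹]_{a₃}·a₂ , [a₁·a₃⁻¹]_{a₂}·a₃ } − a₂ − a₃. -/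
lemma numSg_comm_s12 {a b n : ℕ} (h : n ∈ numSg a b) : n ∈ numSg b a := by
  obtain ⟨p, q, h⟩ := h; exact ⟨q, p, by rw [h]; ring⟩

lemma mem_numSg_int {a b n : ℕ} (p q : ℤ) (hp : 0 ≤ p) (hq : 0 ≤ q)
    (h : (n:ℤ) = p*a + q*b) : n ∈ numSg a b := by
  refine ⟨p.toNat, q.toNat, ?_⟩
  have h2 : (n:ℤ) = ((p.toNat * a + q.toNat * b : ℕ) : ℤ) := by
    push_cast [Int.toNat_of_nonneg hp, Int.toNat_of_nonneg hq]; linarith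
  exact_mod_cast h2

lemma Lnot_int {b c : ℕ} (hcop : Nat.Coprime b c) (z s p q : ℤ) (hs : 0 ≤ s) (hsb : s < b)
    (hdvd : (b:ℤ) ∣ z - s*c) (hlt : z < s*c) (hp : 0 ≤ p) (hq : 0 ≤ q) :
    z ≠ p*b + q*c := by
  intro hz
  have hb : (0:ℤ) < b := lt_of_le_of_lt hs hsb
  have hc : (0:ℤ) ≤ c := Int.natCast_nonneg c
  have h1 : (b:ℤ) ∣ (q - s)*c := by
    have e : (q - s)*c = (z - s*c) - p*b := by rw [hz]; ring
    rw [e]; exact dvd_sub hdvd (Dvd.intro_left p rfl)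
  have hcop' : IsCoprime (b:ℤ) (c:ℤ) := Nat.isCoprime_iff_coprime.mpr hcop
  obtain ⟨k, hk⟩ := hcop'.dvd_of_dvd_mul_right h1
  have hk0 : 0 ≤ k := by nlinarith
  have hqs : s ≤ q := by nlinarith
  have : s*c ≤ z := by nlinarith
  linarith

lemma not_mem_numSg {b c : ℕ} (hcop : Nat.Coprime b c) {n : ℕ} (s : ℤ) (hs : 0 ≤ s)
    (hsb : s < b) (hdvd : (b:ℤ) ∣ (n:ℤ) - s*c) (hlt : (n:ℤ) < s*c) :
    n ∉ numSg b c := by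
  rintro ⟨p, q, rfl⟩
  exact Lnot_int hcop _ s p q hs hsb hdvd hlt (by positivity) (by positivity) (by push_cast; ring)

lemma modInv_spec (k m n : ℕ) (hn : 1 < n) (h : Nat.Coprime m n) :
    (n:ℤ) ∣ (k:ℤ) - (((k * modInv m n) % n) * m : ℕ) := by
  haveI : NeZero n := ⟨by omega⟩
  have hu : IsUnit (m : ZMod n) := (ZMod.isUnit_iff_coprime m n).mpr h
  have hz : ((((k * modInv m n) % n) * m : ℕ) : ZMod n) = (k : ZMod n) := by
    push_cast [modInv, ZMod.natCast_mod]
    rw [ZMod.natCast_val, ZMod.cast_id]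
    rw [mul_assoc, ZMod.inv_mul_of_unit _ hu, mul_one]
  have := (ZMod.natCast_eq_natCast_iff _ _ _).mp hz
  exact_mod_cast this.dvd

lemma mul_mem_numSg {a b c : ℕ} (h2 : 2*a ∈ numSg b c) (h3 : 3*a ∈ numSg b c)
    {k : ℕ} (hk : 2 ≤ k) : k*a ∈ numSg b c := by
  obtain ⟨p2,q2,e2⟩ := h2; obtain ⟨p3,q3,e3⟩ := h3
  obtain ⟨m, r, hmr⟩ : ∃ m r, k = 2*m + 3*r := by
    rcases Nat.even_or_odd k with ⟨m,hm⟩|⟨m,hm⟩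
    · exact ⟨m, 0, by omega⟩
    · exact ⟨m-1, 1, by omega⟩
  refine ⟨m*p2 + r*p3, m*q2 + r*q3, ?_⟩
  have hka : k*a = m*(2*a) + r*(3*a) := by subst hmr; ring
  rw [hka, e2, e3]; ring

set_option maxHeartbeats 1000000 in
/-- Corollary: for pairwise coprime `a₁ > a₂ > a₃ > 1`, if `a₁` is a
fundamental gap of `⟨a₂,a₃⟩` then
`g(a₁,a₂,a₃) = max{[a₁a₂⁻¹]_{a₃}·a₂, [a₁a₃⁻¹]_{a₂}·a₃} − a₂ − a₃`. -/
theorem stmt12 (a₁ a₂ a₃ : ℕ)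
    (h12 : Nat.Coprime a₁ a₂) (h13 : Nat.Coprime a₁ a₃) (h23 : Nat.Coprime a₂ a₃)
    (hgt : a₁ > a₂ ∧ a₂ > a₃ ∧ a₃ > 1)
    (hFG : a₁ ∉ numSg a₂ a₃ ∧ 2 * a₁ ∈ numSg a₂ a₃ ∧ 3 * a₁ ∈ numSg a₂ a₃)
    (g : ℕ) (hg : IsGreatest {n : ℕ | n ∉ numSg3 a₁ a₂ a₃} g) :
    (g : ℤ) = (max (((a₁ * modInv a₂ a₃) % a₃) * a₂)
                   (((a₁ * modInv a₃ a₂) % a₂) * a₃) : ℕ) - a₂ - a₃ := by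
  obtain ⟨hA2, hA3, h31⟩ := hgt
  obtain ⟨hAnot, h2A, h3A⟩ := hFG
  set x := (a₁ * modInv a₂ a₃) % a₃ with hxdef
  set y := (a₁ * modInv a₃ a₂) % a₂ with hydef
  have hb2 : 1 < a₂ := by omega
  have hxlt : x < a₃ := Nat.mod_lt _ (by omega)
  have hylt : y < a₂ := Nat.mod_lt _ (by omega)
  have hxd : (a₃:ℤ) ∣ (a₁:ℤ) - (x:ℤ)*a₂ := by
    have := modInv_spec a₁ a₂ a₃ (by omega) h23
    push_cast at this; exact_mod_cast this
  have hyd : (a₂:ℤ) ∣ (a₁:ℤ) - (y:ℤ)*a₃ := by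
    have := modInv_spec a₁ a₃ a₂ hb2 h23.symm
    push_cast at this; exact_mod_cast this
  clear_value x y
  have hxltZ : (x:ℤ) < a₃ := by exact_mod_cast hxlt
  have hyltZ : (y:ℤ) < a₂ := by exact_mod_cast hylt
  have ha2Z : (a₃:ℤ) < a₂ := by exact_mod_cast hA3
  have ha1Z : (a₂:ℤ) < a₁ := by exact_mod_cast hA2
  have h31Z : (1:ℤ) < a₃ := by exact_mod_cast h31
  have hb2Z : (1:ℤ) < a₂ := by exact_mod_cast hb2
  -- a₁ + a₃ ≤ x*a₂
  obtain ⟨k, hk⟩ := hxd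
  have hkneg : k ≤ -1 := by
    by_contra h'; push_neg at h'
    exact hAnot (mem_numSg_int (x:ℤ) k (by positivity) (by omega)
      (by linear_combination hk))
  have hXB : (a₁:ℤ) + a₃ ≤ (x:ℤ)*a₂ := by
    have h1 : (a₃:ℤ)*k ≤ (a₃:ℤ)*(-1) :=
      mul_le_mul_of_nonneg_left hkneg (by positivity)
    linarith only [hk, h1]
  obtain ⟨l, hl⟩ := hyd
  have hlneg : l ≤ -1 := by
    by_contra h'; push_neg at h'
    exact hAnot (mem_numSg_int l (y:ℤ) (by omega) (by positivity)
      (by linear_combination hl))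
  have hYC : (a₁:ℤ) + a₂ ≤ (y:ℤ)*a₃ := by
    have h1 : (a₂:ℤ)*l ≤ (a₂:ℤ)*(-1) :=
      mul_le_mul_of_nonneg_left hlneg (by positivity)
    linarith only [hl, h1]
  have hx1 : 1 ≤ x := by
    rcases Nat.eq_zero_or_pos x with h0 | h1
    · exfalso
      have hdvd : (a₃:ℤ) ∣ (a₁:ℤ) := by
        have h0' := hk; rw [h0] at h0'; push_cast at h0'
        exact ⟨k, by linarith only [h0']⟩
      have hdn : a₃ ∣ a₁ := by exact_mod_cast hdvd
      have h1 : a₃ ∣ Nat.gcd a₁ a₃ := Nat.dvd_gcd hdn dvd_rfl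
      rw [h13] at h1
      have := Nat.le_of_dvd one_pos h1
      omega
    · exact h1
  have hy1 : 1 ≤ y := by
    rcases Nat.eq_zero_or_pos y with h0 | h1
    · exfalso
      have hdvd : (a₂:ℤ) ∣ (a₁:ℤ) := by
        have h0' := hl; rw [h0] at h0'; push_cast at h0'
        exact ⟨l, by linarith only [h0']⟩
      have hdn : a₂ ∣ a₁ := by exact_mod_cast hdvd
      have h1 : a₂ ∣ Nat.gcd a₁ a₂ := Nat.dvd_gcd hdn dvd_rfl
      rw [h12] at h1
      have := Nat.le_of_dvd one_pos h1
      omega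
    · exact h1
  have hx1Z : (1:ℤ) ≤ x := by exact_mod_cast hx1
  have hy1Z : (1:ℤ) ≤ y := by exact_mod_cast hy1
  -- key identity  a₁ = x·a₂ + y·a₃ − a₂·a₃
  have hcopZ : IsCoprime (a₂:ℤ) (a₃:ℤ) := Nat.isCoprime_iff_coprime.mpr h23
  have key : (a₁:ℤ) = (x:ℤ)*a₂ + (y:ℤ)*a₃ - (a₂:ℤ)*a₃ := by
    set D : ℤ := (x:ℤ)*a₂ + (y:ℤ)*a₃ - (a₂:ℤ)*a₃ - a₁ with hD
    have hD3 : (a₃:ℤ) ∣ D := ⟨(y:ℤ) - a₂ - k, by linear_combination -hk⟩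
    have hD2 : (a₂:ℤ) ∣ D := ⟨(x:ℤ) - a₃ - l, by linear_combination -hl⟩
    have hDd : (a₂:ℤ)*a₃ ∣ D := hcopZ.mul_dvd hD2 hD3
    have e1 : (x:ℤ)*a₂ ≤ ((a₃:ℤ)-1)*a₂ :=
      mul_le_mul_of_nonneg_right (by linarith only [hxltZ]) (by positivity)
    have e2 : (y:ℤ)*a₃ ≤ ((a₂:ℤ)-1)*a₃ :=
      mul_le_mul_of_nonneg_right (by linarith only [hyltZ]) (by positivity)
    have hDub : D < (a₂:ℤ)*a₃ := by
      linarith only [hD, e1, e2, ha1Z, ha2Z, h31Z]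
    have hDlb : -((a₂:ℤ)*a₃) < D := by
      by_contra h'; push_neg at h'
      have he : (0:ℤ) ≤ (a₁:ℤ) - (x:ℤ)*a₂ - (y:ℤ)*a₃ := by linarith only [h', hD]
      have hed : (a₃:ℤ) ∣ (a₁:ℤ) - (x:ℤ)*a₂ - (y:ℤ)*a₃ :=
        ⟨k - (y:ℤ), by linear_combination hk⟩
      obtain ⟨f, hf⟩ := hed
      have hf0 : 0 ≤ f := by
        by_contra h''; push_neg at h''
        have h2 : (a₃:ℤ)*f ≤ (a₃:ℤ)*(-1) :=
          mul_le_mul_of_nonneg_left (by linarith only [h'']) (by positivity)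
        linarith only [h2, hf, he, h31Z]
      exact hAnot (mem_numSg_int (x:ℤ) ((y:ℤ) + f) (by positivity)
        (by linarith only [hy1Z, hf0]) (by linear_combination hf))
    obtain ⟨m, hm⟩ := hDd
    have hP : (0:ℤ) < (a₂:ℤ)*a₃ := by positivity
    have hm1 : -1 < m := by
      by_contra h'; push_neg at h'
      have h2 : (a₂:ℤ)*a₃*m ≤ (a₂:ℤ)*a₃*(-1) :=
        mul_le_mul_of_nonneg_left (by linarith only [h']) (le_of_lt hP)
      linarith only [h2, hm, hDlb]
    have hm2 : m < 1 := by
      by_contra h'; push_neg at h'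
      have h2 : (a₂:ℤ)*a₃*1 ≤ (a₂:ℤ)*a₃*m :=
        mul_le_mul_of_nonneg_left (by linarith only [h']) (le_of_lt hP)
      linarith only [h2, hm, hDub]
    have hm0 : m = 0 := by omega
    rw [hm0, mul_zero] at hm
    linarith only [hm, hD]
  -- the max and the candidate N
  set M := max (x*a₂) (y*a₃) with hMdef
  have hMxN : x*a₂ ≤ M := by rw [hMdef]; exact le_max_left _ _
  have hMyN : y*a₃ ≤ M := by rw [hMdef]; exact le_max_right _ _
  clear_value M
  have hMxZ : (x:ℤ)*a₂ ≤ (M:ℤ) := by exact_mod_cast hMxN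
  have hMyZ : (y:ℤ)*a₃ ≤ (M:ℤ) := by exact_mod_cast hMyN
  have hMlbZ : (a₂:ℤ) + a₃ < (M:ℤ) := by linarith only [hXB, ha1Z, hMxZ]
  have hMlb : a₂ + a₃ < M := by exact_mod_cast hMlbZ
  set N := M - a₂ - a₃ with hNdef
  clear_value N
  have hNZ : (N:ℤ) = (M:ℤ) - a₂ - a₃ := by omega
  -- every n > N lies in ⟨a₁,a₂,a₃⟩
  have claim2 : ∀ n : ℕ, N < n → n ∈ numSg3 a₁ a₂ a₃ := by
    intro n hn
    have hnZ : (N:ℤ) < n := by exact_mod_cast hn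
    have hn1 : (x:ℤ)*a₂ - a₂ - a₃ < n := by linarith only [hnZ, hNZ, hMxZ]
    have hn2 : (y:ℤ)*a₃ - a₂ - a₃ < n := by linarith only [hnZ, hNZ, hMyZ]
    by_cases hT : n ∈ numSg a₂ a₃
    · obtain ⟨p, q, h⟩ := hT
      exact ⟨0, p, q, by rw [h]; ring⟩
    · have hsd : (a₂:ℤ) ∣ (n:ℤ) - (((n * modInv a₃ a₂) % a₂ : ℕ):ℤ)*a₃ := by
        have := modInv_spec n a₃ a₂ hb2 h23.symm
        push_cast at this ⊢; exact_mod_cast this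
      set s := (n * modInv a₃ a₂) % a₂ with hsdef
      have hslt : s < a₂ := Nat.mod_lt _ (by omega)
      clear_value s
      have hsltZ : (s:ℤ) < a₂ := by exact_mod_cast hslt
      obtain ⟨t, ht⟩ := hsd
      have hne : (n:ℤ) = (s:ℤ)*a₃ + t*a₂ := by linear_combination ht
      have htneg : t ≤ -1 := by
        by_contra h'; push_neg at h'
        exact hT (mem_numSg_int t (s:ℤ) (by omega) (by positivity)
          (by linear_combination ht))
      have hta : (t:ℤ)*a₂ ≤ (-1)*a₂ := mul_le_mul_of_nonneg_right htneg (by positivity)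
      have hsY : (y:ℤ) ≤ s := by
        by_contra h'; push_neg at h'
        have e1 : (s:ℤ)*a₃ ≤ ((y:ℤ)-1)*a₃ :=
          mul_le_mul_of_nonneg_right (by linarith only [h']) (by positivity)
        linarith only [hne, hta, e1, hn2]
      have htX : (x:ℤ) ≤ t + a₃ := by
        by_contra h'; push_neg at h'
        have e1 : (t:ℤ)*a₂ ≤ ((x:ℤ) - a₃ - 1)*a₂ :=
          mul_le_mul_of_nonneg_right (by linarith only [h']) (by positivity)
        have e2 : (s:ℤ)*a₃ ≤ ((a₂:ℤ)-1)*a₃ :=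
          mul_le_mul_of_nonneg_right (by linarith only [hsltZ]) (by positivity)
        linarith only [hne, e1, e2, hn1]
      have hnAZ : (a₁:ℤ) ≤ n := by
        have c1 : (0:ℤ) ≤ ((s:ℤ) - y)*a₃ :=
          mul_nonneg (by linarith only [hsY]) (by positivity)
        have c2 : (0:ℤ) ≤ (t + (a₃:ℤ) - x)*a₂ :=
          mul_nonneg (by linarith only [htX]) (by positivity)
        linarith only [c1, c2, hne, key]
      have hnA : a₁ ≤ n := by exact_mod_cast hnAZ
      have hmem : n - a₁ ∈ numSg a₂ a₃ := by
        refine mem_numSg_int (t + (a₃:ℤ) - x) ((s:ℤ) - y)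
          (by linarith only [htX]) (by linarith only [hsY]) ?_
        rw [Nat.cast_sub hnA]
        linear_combination hne - key
      obtain ⟨p, q, hpq⟩ := hmem
      refine ⟨1, p, q, ?_⟩
      have h' : n = a₁ + (n - a₁) := by omega
      rw [h', hpq]; ring
  -- N itself is not in ⟨a₁,a₂,a₃⟩, in both max cases
  have final : N ∉ numSg a₂ a₃ → (∀ q r : ℕ, (N:ℤ) ≠ (a₁:ℤ) + q*a₂ + r*a₃) →
      (g : ℤ) = (M:ℤ) - a₂ - a₃ := by
    intro hNnotT hNnotA
    have hNnot : N ∉ numSg3 a₁ a₂ a₃ := by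
      rintro ⟨p, q, r, hrep⟩
      obtain hp0 | hp1 | hp2 : p = 0 ∨ p = 1 ∨ 2 ≤ p := by omega
      · subst hp0; exact hNnotT ⟨q, r, by rw [hrep]; ring⟩
      · subst hp1; exact hNnotA q r (by push_cast [hrep]; ring)
      · obtain ⟨u, v, huv⟩ := mul_mem_numSg h2A h3A hp2
        exact hNnotT ⟨u + q, v + r, by rw [hrep, huv]; ring⟩
    have hgN : g = N := le_antisymm
      (by by_contra h'; push_neg at h'; exact hg.1 (claim2 g h'))
      (hg.2 hNnot)
    rw [hgN]; exact hNZ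
  rcases le_total (y*a₃) (x*a₂) with hmax | hmax
  · have hMZ : (M:ℤ) = (x:ℤ)*a₂ := by
      rw [hMdef, max_eq_left hmax]; push_cast; ring
    refine final ?_ ?_
    · intro h
      exact not_mem_numSg h23.symm ((x:ℤ)-1) (by linarith only [hx1Z])
        (by linarith only [hxltZ])
        ⟨-1, by linarith only [hNZ, hMZ]⟩
        (by linarith only [hNZ, hMZ, h31Z]) (numSg_comm_s12 h)
    · intro q r h
      exact Lnot_int h23 ((N:ℤ) - a₁) ((a₂:ℤ)-1-y) q r
        (by linarith only [hyltZ]) (by linarith only [hy1Z])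
        ⟨-1, by linarith only [hNZ, hMZ, key]⟩
        (by linarith only [hNZ, hMZ, key, hb2Z])
        (by positivity) (by positivity) (by linear_combination h)
  · have hMZ : (M:ℤ) = (y:ℤ)*a₃ := by
      rw [hMdef, max_eq_right hmax]; push_cast; ring
    refine final ?_ ?_
    · intro h
      exact not_mem_numSg h23 ((y:ℤ)-1) (by linarith only [hy1Z])
        (by linarith only [hyltZ])
        ⟨-1, by linarith only [hNZ, hMZ]⟩
        (by linarith only [hNZ, hMZ, hb2Z]) h
    · intro q r h
      exact Lnot_int h23.symm ((N:ℤ) - a₁) ((a₃:ℤ)-1-x) r q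
        (by linarith only [hxltZ]) (by linarith only [hx1Z])
        ⟨-1, by linarith only [hNZ, hMZ, key]⟩
        (by linarith only [hNZ, hMZ, key, h31Z])
        (by positivity) (by positivity) (by linear_combination h)
end

section
/- Let a₁,a₂,a₃ be pairwise coprime positive integers with a₁ > a₂ > a₃ > 1. If L₁ = 1 (i.e. a₁ ∈ ⟨a₂,a₃⟩), then L₂ = a₃ and L₃ = a₂. -/
lemma key_min (b c p q x lam mu : ℕ) (hp : 1 ≤ p) (hq : 1 ≤ q)
    (hb : 0 < b) (hc : 0 < c) (hcop : Nat.Coprime c b) (hx : 0 < x)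
    (heq : x * b = lam * (p * b + q * c) + mu * c) : c ≤ x := by
  rcases Nat.eq_zero_or_pos lam with hlam | hlam
  · subst hlam
    simp at heq
    have hdvd : c ∣ x * b := ⟨mu, by linarith [heq]⟩
    have : c ∣ x := hcop.dvd_of_dvd_mul_right hdvd
    exact Nat.le_of_dvd hx this
  · have heq' : x * b = lam * p * b + (lam * q + mu) * c := by ring_nf; ring_nf at heq; linarith
    have hlt : lam * p < x := by
      by_contra h
      push_neg at h
      have h1 : x * b ≤ lam * p * b := Nat.mul_le_mul_right b h
      have h2 : 1 ≤ lam * q + mu := by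
        have := Nat.mul_le_mul hlam hq; omega
      nlinarith
    have hsub : (x - lam * p) * b = (lam * q + mu) * c := by
      have := Nat.sub_mul x (lam * p) b
      omega
    have hdvd : c ∣ (x - lam * p) * b := ⟨lam * q + mu, by linarith [hsub]⟩
    have hdx : c ∣ x - lam * p := hcop.dvd_of_dvd_mul_right hdvd
    have := Nat.le_of_dvd (by omega) hdx
    omega

/-- For pairwise coprime `a₁ > a₂ > a₃ > 1`, if `L₁ = 1` then `L₂ = a₃` and
`L₃ = a₂`. -/
theorem stmt13 (a₁ a₂ a₃ : ℕ)
    (h12 : Nat.Coprime a₁ a₂) (h13 : Nat.Coprime a₁ a₃) (h23 : Nat.Coprime a₂ a₃)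
    (hgt : a₁ > a₂ ∧ a₂ > a₃ ∧ a₃ > 1)
    (hL₁ : Lval a₁ a₂ a₃ = 1) :
    Lval a₂ a₁ a₃ = a₃ ∧ Lval a₃ a₁ a₂ = a₂ := by
  obtain ⟨hg1, hg2, hg3⟩ := hgt
  -- from hL₁, a₁ ∈ ⟨a₂,a₃⟩
  have hne : {x : ℕ | 0 < x ∧ x * a₁ ∈ numSg a₂ a₃}.Nonempty := by
    by_contra h
    rw [Set.not_nonempty_iff_eq_empty] at h
    rw [Lval, h] at hL₁
    simp at hL₁
  have hmem := Nat.sInf_mem hne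
  rw [← Lval, hL₁] at hmem
  obtain ⟨-, p, q, hpq⟩ := hmem
  simp only [one_mul] at hpq
  have hp : 1 ≤ p := by
    rcases Nat.eq_zero_or_pos p with h | h
    · exfalso
      subst h
      simp at hpq
      have : a₃ ∣ a₁ := ⟨q, by linarith⟩
      have h1 : a₃ ∣ Nat.gcd a₁ a₃ := Nat.dvd_gcd this dvd_rfl
      rw [h13] at h1
      have := Nat.dvd_one.mp h1
      omega
    · exact h
  have hq : 1 ≤ q := by
    rcases Nat.eq_zero_or_pos q with h | h
    · exfalso
      subst h
      simp at hpq
      have : a₂ ∣ a₁ := ⟨p, by linarith⟩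
      have h1 : a₂ ∣ Nat.gcd a₁ a₂ := Nat.dvd_gcd this dvd_rfl
      rw [h12] at h1
      have := Nat.dvd_one.mp h1
      omega
    · exact h
  have hb2 : 0 < a₂ := by omega
  have hb3 : 0 < a₃ := by omega
  constructor
  · apply le_antisymm
    · apply Nat.sInf_le
      exact ⟨hb3, 0, a₂, by ring⟩
    · have hne2 : {x : ℕ | 0 < x ∧ x * a₂ ∈ numSg a₁ a₃}.Nonempty :=
        ⟨a₃, hb3, 0, a₂, by ring⟩
      obtain ⟨hx, lam, mu, hxe⟩ := Nat.sInf_mem hne2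
      set x := sInf {x : ℕ | 0 < x ∧ x * a₂ ∈ numSg a₁ a₃}
      rw [hpq] at hxe
      exact key_min a₂ a₃ p q x lam mu hp hq hb2 hb3 h23.symm hx hxe
  · apply le_antisymm
    · apply Nat.sInf_le
      exact ⟨hb2, 0, a₃, by ring⟩
    · have hne2 : {x : ℕ | 0 < x ∧ x * a₃ ∈ numSg a₁ a₂}.Nonempty :=
        ⟨a₂, hb2, 0, a₃, by ring⟩
      obtain ⟨hx, lam, mu, hxe⟩ := Nat.sInf_mem hne2
      set x := sInf {x : ℕ | 0 < x ∧ x * a₃ ∈ numSg a₁ a₂}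
      rw [hpq] at hxe
      have hxe' : x * a₃ = lam * (q * a₃ + p * a₂) + mu * a₂ := by linarith [hxe]
      exact key_min a₃ a₂ q p x lam mu hq hp hb3 hb2 h23 hx hxe'
end
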